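/- arXiv:1508.04905 — 7 statements merged into one kernel-verified Lean document; each statement's English description precedes it below -/
import Mathlib

section
/- Let N be a standard Gaussian random variable. Then for every real q > 2, E[|N|^q] ≤ √2 · e · √q · (q/e)^(q/2). -/
/-!
Split the Gaussian weight as `exp (-a x² / 2) * exp (-(1 - a) x² / 2)` with `0 < a < 1`. The first
factor absorbs `|x| ^ q` uniformly, because `s ^ r * exp (-c s) ≤ (r / (c e)) ^ r` for `s ≥ 0`, and
the second integrates to `(1 - a) ^ (-1/2)` against `dx / √(2π)`. The choice `a = (q - 1) / q`
gives `E|N| ^ q ≤ √q (q / (q - 1)) ^ (q / 2) (q / e) ^ (q / 2)`, and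
`(q / (q - 1)) ^ (q / 2) ≤ exp (q / (2 (q - 1))) ≤ e` as soon as `q ≥ 2`.
-/

open MeasureTheory ProbabilityTheory Real

theorem rpow_mul_exp_neg_mul_le {r c s : ℝ} (hr : 0 < r) (hc : 0 < c) (hs : 0 ≤ s) :
    s ^ r * exp (-(c * s)) ≤ (r / (c * exp 1)) ^ r := by
  have hexp : exp (-(c * s)) = exp (-(c * s / r)) ^ r := by
    rw [← exp_mul]; congr 1; field_simp
  have hbase : s * exp (-(c * s / r)) ≤ r / (c * exp 1) :=
    calc s * exp (-(c * s / r)) = r / c * (c * s / r * exp (-(c * s / r))) := by field_simp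
      _ ≤ r / c * exp (-1) := by gcongr; exact mul_exp_neg_le_exp_neg_one _
      _ = r / (c * exp 1) := by rw [exp_neg]; field_simp
  rw [hexp, ← mul_rpow hs (exp_nonneg _)]
  gcongr

theorem one_add_rpow_le_exp_mul {x y : ℝ} (hx : -1 ≤ x) (hy : 0 ≤ y) :
    (1 + x) ^ y ≤ exp (x * y) := by
  rw [exp_mul]
  gcongr
  · linarith
  · linarith [add_one_le_exp x]

theorem integral_abs_rpow_gaussianReal_le {q a : ℝ} (hq : 0 < q) (ha₀ : 0 < a) (ha₁ : a < 1) :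
    ∫ x, |x| ^ q ∂(gaussianReal 0 1) ≤ (q / (a * exp 1)) ^ (q / 2) / √(1 - a) := by
  set C := (q / (a * exp 1)) ^ (q / 2)
  have hpoint (x : ℝ) : gaussianPDFReal 0 1 x • |x| ^ q ≤
      C * ((√(2 * π))⁻¹ * exp (-((1 - a) / 2) * x ^ 2)) := by
    have hsup : |x| ^ q * exp (-(a / 2 * x ^ 2)) ≤ C := by
      have hpow : |x| ^ q = (x ^ 2) ^ (q / 2) := by
        rw [← sq_abs, ← rpow_natCast, ← rpow_mul (abs_nonneg x)]; ring_nf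
      have hC : q / 2 / (a / 2 * exp 1) = q / (a * exp 1) := by field_simp
      simpa only [hpow, hC] using rpow_mul_exp_neg_mul_le (half_pos hq) (half_pos ha₀) (sq_nonneg x)
    have hsplit : gaussianPDFReal 0 1 x • |x| ^ q =
        |x| ^ q * exp (-(a / 2 * x ^ 2)) * ((√(2 * π))⁻¹ * exp (-((1 - a) / 2) * x ^ 2)) := by
      simp only [gaussianPDFReal, smul_eq_mul, NNReal.coe_one, mul_one, sub_zero]
      rw [mul_mul_mul_comm, ← exp_add]; ring_nf
    rw [hsplit]
    gcongr
  have hint : Integrable (fun x : ℝ ↦ C * ((√(2 * π))⁻¹ * exp (-((1 - a) / 2) * x ^ 2))) :=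
    ((integrable_exp_neg_mul_sq (by linarith)).const_mul _).const_mul _
  calc ∫ x, |x| ^ q ∂(gaussianReal 0 1)
      = ∫ x, gaussianPDFReal 0 1 x • |x| ^ q := integral_gaussianReal_eq_integral_smul one_ne_zero
    _ ≤ ∫ x, C * ((√(2 * π))⁻¹ * exp (-((1 - a) / 2) * x ^ 2)) :=
        integral_mono_of_nonneg
          (ae_of_all _ fun x ↦ smul_nonneg (gaussianPDFReal_nonneg 0 1 x) (by positivity)) hint
          (ae_of_all _ hpoint)
    _ = C / √(1 - a) := by
        rw [integral_const_mul, integral_const_mul, integral_gaussian,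
          show π / ((1 - a) / 2) = 2 * π / (1 - a) by field_simp, sqrt_div' _ (by linarith)]
        field_simp

/-- Moment bound for the standard Gaussian: for every `q > 2`,
`E[|N|^q] ≤ √2 · e · √q · (q/e)^(q/2)`. -/
theorem gaussian_abs_moment_bound (q : ℝ) (hq : 2 < q) :
    ∫ x, |x| ^ q ∂(gaussianReal 0 1) ≤
      Real.sqrt 2 * Real.exp 1 * Real.sqrt q * (q / Real.exp 1) ^ (q / 2) := by
  have hq₀ : 0 < q := by linarith
  have hq₁ : 0 < q - 1 := by linarith
  have hconst : (q / ((q - 1) / q * exp 1)) ^ (q / 2) / √(1 - (q - 1) / q) =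
      (1 + 1 / (q - 1)) ^ (q / 2) * √q * (q / exp 1) ^ (q / 2) := by
    have hvar : 1 - (q - 1) / q = q⁻¹ := by field_simp; ring
    have hbase : q / ((q - 1) / q * exp 1) = (1 + 1 / (q - 1)) * (q / exp 1) := by
      field_simp; ring
    rw [hvar, hbase, mul_rpow (by positivity) (by positivity), sqrt_inv, div_inv_eq_mul]
    ring
  have hfactor : (1 + 1 / (q - 1)) ^ (q / 2) ≤ exp 1 := by
    refine (one_add_rpow_le_exp_mul (by linarith [one_div_pos.2 hq₁]) (by positivity)).trans ?_
    rw [exp_le_exp, div_mul_div_comm, div_le_one (by positivity)]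
    linarith
  calc ∫ x, |x| ^ q ∂(gaussianReal 0 1)
      ≤ (q / ((q - 1) / q * exp 1)) ^ (q / 2) / √(1 - (q - 1) / q) :=
        integral_abs_rpow_gaussianReal_le hq₀ (by positivity) (by rw [div_lt_one hq₀]; linarith)
    _ = (1 + 1 / (q - 1)) ^ (q / 2) * √q * (q / exp 1) ^ (q / 2) := hconst
    _ ≤ 1 * exp 1 * √q * (q / exp 1) ^ (q / 2) := by rw [one_mul]; gcongr
    _ ≤ √2 * exp 1 * √q * (q / exp 1) ^ (q / 2) := by gcongr; exact one_le_sqrt.2 one_le_two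
end

section
/- Let S be a binomial random variable with parameters k and 1/2 (k a positive integer). Then for every real q > 3, E[|S − E[S]|^q] ≤ 4√e · √q · (qk/(2e))^(q/2). -/
/-!
Put `m = ⌈q / 2⌉`. Lyapunov's inequality bounds `E|S - k/2|^q` by `(E (S - k/2)^(2m))^(q/(2m))`.
Splitting off the last coin gives a recursion in `k` for the even central moments, from which
they are, by induction, at most the Gaussian moments `(2m - 1)‼ (k/4)^m ≤ m! (k/2)^m` of the same
variance. Stirling's bound `m! ≤ e √m (m/e)^m`, together with `q/2 ≤ m ≤ q`, finishes the proof.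
-/

open MeasureTheory ProbabilityTheory Real
open Finset Nat

set_option linter.deprecated false

theorem sum_range_succ_choose_succ_mul {R : Type*} [CommRing R] (k : ℕ) (f : ℕ → R) :
    ∑ s ∈ range (k + 2), ((k + 1).choose s : R) * f s
      = ∑ s ∈ range (k + 1), (k.choose s : R) * (f s + f (s + 1)) := by
  have hshift : ∑ s ∈ range (k + 1), (k.choose (s + 1) : R) * f (s + 1) + f 0
      = ∑ s ∈ range (k + 1), (k.choose s : R) * f s := by
    have := sum_range_succ' (fun s => (k.choose s : R) * f s) (k + 1)
    rw [sum_range_succ, choose_succ_self] at this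
    simpa using this.symm
  rw [sum_range_succ']
  simp only [choose_succ_succ', cast_add, add_mul, sum_add_distrib, mul_add, choose_zero_right,
    cast_one, one_mul]
  linear_combination hshift

theorem sum_range_two_mul_add_one {M : Type*} [AddCommMonoid M] (c : ℕ → M) (m : ℕ) :
    ∑ j ∈ range (2 * m + 1), c j
      = ∑ i ∈ range (m + 1), c (2 * i) + ∑ i ∈ range m, c (2 * i + 1) := by
  induction m with
  | zero => simp
  | succ n ih =>
    conv_lhs => rw [show 2 * (n + 1) + 1 = 2 * n + 1 + 1 + 1 by ring, sum_range_succ,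
      sum_range_succ, ih]
    conv_rhs => rw [sum_range_succ, sum_range_succ (fun i => c (2 * i + 1)) n]
    rw [show 2 * n + 1 + 1 = 2 * (n + 1) by ring]
    abel

theorem add_pow_two_mul_add_sub_pow_two_mul {R : Type*} [CommRing R] (x c : R) (m : ℕ) :
    (x + c) ^ (2 * m) + (x - c) ^ (2 * m)
      = 2 * ∑ i ∈ range (m + 1),
          ((2 * m).choose (2 * i) : R) * x ^ (2 * (m - i)) * (c ^ 2) ^ i := by
  rw [add_comm x c, sub_eq_add_neg, add_comm x (-c), add_pow, add_pow, ← sum_add_distrib,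
    sum_range_two_mul_add_one, mul_sum]
  have hodd : ∀ i ∈ range m,
      c ^ (2 * i + 1) * x ^ (2 * m - (2 * i + 1)) * ((2 * m).choose (2 * i + 1) : R)
        + (-c) ^ (2 * i + 1) * x ^ (2 * m - (2 * i + 1)) * ((2 * m).choose (2 * i + 1) : R)
      = 0 :=
    fun i _ => by rw [Odd.neg_pow ⟨i, rfl⟩]; ring
  rw [sum_eq_zero hodd, add_zero]
  refine sum_congr rfl fun i _ => ?_
  rw [(even_two_mul i).neg_pow, ← pow_mul, Nat.mul_sub]
  ring

/-- `2 ^ k` times the `2m`-th central moment of `Binomial(k, 1/2)`. -/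
noncomputable def binomialEvenMomentSum (k m : ℕ) : ℝ :=
  ∑ s ∈ range (k + 1), (k.choose s : ℝ) * ((s : ℝ) - k / 2) ^ (2 * m)

/-- The `2m`-th moment `(2m - 1)‼` of a standard Gaussian. -/
noncomputable def gaussianEvenMoment (m : ℕ) : ℝ :=
  (2 * m)! / (2 ^ m * m !)

theorem binomialEvenMomentSum_succ (k m : ℕ) :
    binomialEvenMomentSum (k + 1) m
      = 2 * ∑ i ∈ range (m + 1),
          ((2 * m).choose (2 * i) : ℝ) * (1 / 4) ^ i * binomialEvenMomentSum k (m - i) := by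
  rw [binomialEvenMomentSum, cast_add_one, sum_range_succ_choose_succ_mul]
  have hpair : ∀ s ∈ range (k + 1), (k.choose s : ℝ) * (((s : ℝ) - (k + 1) / 2) ^ (2 * m)
      + (((s + 1 : ℕ) : ℝ) - (k + 1) / 2) ^ (2 * m)) = (k.choose s : ℝ) * (2 *
        ∑ i ∈ range (m + 1), ((2 * m).choose (2 * i) : ℝ) * ((s : ℝ) - k / 2) ^ (2 * (m - i))
          * (1 / 4) ^ i) := fun s _ => by
    have h := add_pow_two_mul_add_sub_pow_two_mul ((s : ℝ) - k / 2) (1 / 2) m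
    rw [show ((1 : ℝ) / 2) ^ 2 = 1 / 4 by norm_num] at h
    rw [← h, add_comm]
    congr 3 <;> push_cast <;> ring
  simp only [sum_congr rfl hpair, binomialEvenMomentSum, mul_sum]
  rw [sum_comm]
  refine sum_congr rfl fun i _ => sum_congr rfl fun s _ => ?_
  ring

theorem choose_mul_gaussianEvenMoment_le {m i : ℕ} (hi : i ≤ m) :
    ((2 * m).choose (2 * i) : ℝ) * gaussianEvenMoment (m - i)
      ≤ (m.choose i : ℝ) * gaussianEvenMoment m := by
  have hdouble : (2 ^ i * i ! : ℝ) ≤ (2 * i)! := by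
    have h := doubleFactorial_le_factorial (2 * i)
    rw [doubleFactorial_two_mul] at h
    exact_mod_cast h
  rw [gaussianEvenMoment, gaussianEvenMoment, cast_choose ℝ (by omega : 2 * i ≤ 2 * m),
    cast_choose ℝ hi, ← Nat.mul_sub]
  calc ((2 * m)! : ℝ) / ((2 * i)! * (2 * (m - i))!) * ((2 * (m - i))! / (2 ^ (m - i) * (m - i)!))
      = (2 * m)! / ((2 * i)! * (2 ^ (m - i) * (m - i)!)) := by field_simp
    _ ≤ (2 * m)! / ((2 ^ i * i !) * (2 ^ (m - i) * (m - i)!)) := by gcongr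
    _ = m ! / (i ! * (m - i)!) * ((2 * m)! / (2 ^ m * m !)) := by
      rw [← pow_sub_mul_pow 2 hi]
      field_simp

theorem gaussianEvenMoment_le (m : ℕ) : gaussianEvenMoment m ≤ 2 ^ m * m ! := by
  have hfact : ((2 * m)! : ℝ) = centralBinom m * m ! * m ! := by
    have h := choose_mul_factorial_mul_factorial (show m ≤ 2 * m by omega)
    rw [show 2 * m - m = m by omega, ← centralBinom_eq_two_mul_choose] at h
    exact_mod_cast h.symm
  have hcentral : (centralBinom m : ℝ) ≤ 2 ^ m * 2 ^ m := by
    rw [← mul_pow]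
    exact_mod_cast centralBinom_le_four_pow m
  rw [gaussianEvenMoment, div_le_iff₀ (by positivity), hfact]
  calc (centralBinom m : ℝ) * m ! * m ! ≤ 2 ^ m * 2 ^ m * m ! * m ! := by gcongr
    _ = 2 ^ m * m ! * (2 ^ m * m !) := by ring

theorem binomialEvenMomentSum_le (k m : ℕ) :
    binomialEvenMomentSum k m ≤ 2 ^ k * gaussianEvenMoment m * (k / 4) ^ m := by
  induction k generalizing m with
  | zero => cases m <;> simp [binomialEvenMomentSum, gaussianEvenMoment]
  | succ k ih =>
    rw [binomialEvenMomentSum_succ]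
    calc 2 * ∑ i ∈ range (m + 1),
            ((2 * m).choose (2 * i) : ℝ) * (1 / 4) ^ i * binomialEvenMomentSum k (m - i)
        ≤ 2 * ∑ i ∈ range (m + 1), ((2 * m).choose (2 * i) : ℝ) * (1 / 4) ^ i
            * (2 ^ k * gaussianEvenMoment (m - i) * (k / 4) ^ (m - i)) := by
          gcongr with i
          exact ih (m - i)
      _ ≤ 2 * ∑ i ∈ range (m + 1), (m.choose i : ℝ) * gaussianEvenMoment m * (1 / 4) ^ i
            * (2 ^ k * (k / 4) ^ (m - i)) := by
          refine mul_le_mul_of_nonneg_left (sum_le_sum fun i hi => ?_) zero_le_two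
          have hle := choose_mul_gaussianEvenMoment_le (mem_range_succ_iff.mp hi)
          calc ((2 * m).choose (2 * i) : ℝ) * (1 / 4) ^ i
                * (2 ^ k * gaussianEvenMoment (m - i) * (k / 4) ^ (m - i))
              = ((2 * m).choose (2 * i) * gaussianEvenMoment (m - i))
                * ((1 / 4) ^ i * (2 ^ k * (k / 4) ^ (m - i))) := by ring
            _ ≤ (m.choose i * gaussianEvenMoment m)
                * ((1 / 4) ^ i * (2 ^ k * (k / 4) ^ (m - i))) := by gcongr
            _ = _ := by ring
      _ = 2 ^ (k + 1) * gaussianEvenMoment m * (((k + 1 : ℕ) : ℝ) / 4) ^ m := by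
          rw [cast_add_one, add_div, add_comm (k / 4 : ℝ), add_pow, mul_sum, mul_sum]
          refine sum_congr rfl fun i _ => ?_
          ring

theorem sum_choose_div_mul_sub_half_pow_le (k m : ℕ) :
    ∑ s ∈ range (k + 1), (k.choose s : ℝ) / 2 ^ k * ((s : ℝ) - k / 2) ^ (2 * m)
      ≤ m ! * ((k : ℝ) / 2) ^ m := by
  have hsum : ∑ s ∈ range (k + 1), (k.choose s : ℝ) / 2 ^ k * ((s : ℝ) - k / 2) ^ (2 * m)
      = binomialEvenMomentSum k m / 2 ^ k := by
    rw [binomialEvenMomentSum, sum_div]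
    exact sum_congr rfl fun s _ => div_mul_eq_mul_div _ _ _
  rw [hsum, div_le_iff₀ (by positivity)]
  calc binomialEvenMomentSum k m ≤ 2 ^ k * gaussianEvenMoment m * (k / 4) ^ m :=
        binomialEvenMomentSum_le k m
    _ ≤ 2 ^ k * (2 ^ m * m !) * (k / 4) ^ m := by gcongr; exact gaussianEvenMoment_le m
    _ = m ! * ((k : ℝ) / 2) ^ m * 2 ^ k := by
        rw [div_pow, div_pow, show (4 : ℝ) ^ m = 2 ^ m * 2 ^ m by rw [← mul_pow]; norm_num]
        field_simp

theorem sum_mul_rpow_le_rpow_sum_mul_rpow {ι : Type*} (s : Finset ι) {w x : ι → ℝ}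
    (hw : ∀ i ∈ s, 0 ≤ w i) (hw1 : ∑ i ∈ s, w i = 1) (hx : ∀ i ∈ s, 0 ≤ x i)
    {p r : ℝ} (hp : 0 < p) (hpr : p ≤ r) :
    ∑ i ∈ s, w i * x i ^ p ≤ (∑ i ∈ s, w i * x i ^ r) ^ (p / r) := by
  have hr : 0 < r := hp.trans_le hpr
  have hjensen := Real.rpow_arith_mean_le_arith_mean_rpow s w (fun i => x i ^ p) hw hw1
    (fun i hi => rpow_nonneg (hx i hi) p) ((one_le_div hp).mpr hpr)
  have hpow : ∀ i ∈ s, w i * (x i ^ p) ^ (r / p) = w i * x i ^ r := fun i hi => by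
    rw [← rpow_mul (hx i hi), mul_div_cancel₀ r hp.ne']
  rw [sum_congr rfl hpow] at hjensen
  have hsum : 0 ≤ ∑ i ∈ s, w i * x i ^ p :=
    sum_nonneg fun i hi => mul_nonneg (hw i hi) (rpow_nonneg (hx i hi) p)
  calc ∑ i ∈ s, w i * x i ^ p = ((∑ i ∈ s, w i * x i ^ p) ^ (r / p)) ^ (p / r) := by
        rw [← rpow_mul hsum, show r / p * (p / r) = 1 by field_simp, rpow_one]
    _ ≤ (∑ i ∈ s, w i * x i ^ r) ^ (p / r) :=
        rpow_le_rpow (rpow_nonneg hsum _) hjensen (div_pos hp hr).le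

theorem sum_choose_div_mul_abs_sub_half_rpow_le (k : ℕ) {m : ℕ} (hm : m ≠ 0) {q : ℝ}
    (hq : 0 < q) (hqm : q ≤ 2 * m) :
    ∑ s ∈ range (k + 1), (k.choose s : ℝ) / 2 ^ k * |(s : ℝ) - k / 2| ^ q
      ≤ (m ! : ℝ) ^ (q / (2 * m)) * ((k : ℝ) / 2) ^ (q / 2) := by
  have hweights : ∑ s ∈ range (k + 1), (k.choose s : ℝ) / 2 ^ k = 1 := by
    rw [← sum_div, ← cast_sum, sum_range_choose, cast_pow, cast_two, div_self (by positivity)]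
  have heven : ∀ s ∈ range (k + 1), (k.choose s : ℝ) / 2 ^ k * |(s : ℝ) - k / 2| ^ (2 * m : ℝ)
      = (k.choose s : ℝ) / 2 ^ k * ((s : ℝ) - k / 2) ^ (2 * m) := fun s _ => by
    rw [← cast_ofNat, ← cast_mul, rpow_natCast, (even_two_mul m).pow_abs]
  calc ∑ s ∈ range (k + 1), (k.choose s : ℝ) / 2 ^ k * |(s : ℝ) - k / 2| ^ q
      ≤ (∑ s ∈ range (k + 1), (k.choose s : ℝ) / 2 ^ k * |(s : ℝ) - k / 2| ^ (2 * m : ℝ))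
          ^ (q / (2 * m)) :=
        sum_mul_rpow_le_rpow_sum_mul_rpow _ (fun _ _ => by positivity) hweights
          (fun _ _ => abs_nonneg _) hq hqm
    _ ≤ (m ! * ((k : ℝ) / 2) ^ m) ^ (q / (2 * m)) := by
        refine rpow_le_rpow (sum_nonneg fun _ _ => by positivity) ?_ (by positivity)
        rw [sum_congr rfl heven]
        exact sum_choose_div_mul_sub_half_pow_le k m
    _ = (m ! : ℝ) ^ (q / (2 * m)) * ((k : ℝ) / 2) ^ (q / 2) := by
        rw [mul_rpow (by positivity) (by positivity), ← rpow_natCast, ← rpow_mul (by positivity)]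
        congr 2
        field_simp

theorem factorial_le_exp_one_mul_sqrt_mul_pow {n : ℕ} (hn : n ≠ 0) :
    (n ! : ℝ) ≤ exp 1 * √n * (n / exp 1) ^ n := by
  have hseq : Stirling.stirlingSeq n ≤ exp 1 / √2 := by
    obtain ⟨k, rfl⟩ := Nat.exists_eq_succ_of_ne_zero hn
    rw [← Stirling.stirlingSeq_one]
    exact Stirling.stirlingSeq'_antitone (Nat.zero_le k)
  have hpos : 0 < √(2 * n : ℝ) * (n / exp 1) ^ n := by
    have : (0 : ℝ) < n := by positivity
    positivity
  rw [Stirling.stirlingSeq, div_le_iff₀ hpos] at hseq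
  calc (n ! : ℝ) ≤ exp 1 / √2 * (√(2 * n : ℝ) * (n / exp 1) ^ n) := hseq
    _ = exp 1 * √n * (n / exp 1) ^ n := by
      rw [Real.sqrt_mul (by norm_num)]
      field_simp

theorem factorial_rpow_le {m : ℕ} (hm : m ≠ 0) {q : ℝ} (hq : 0 < q) (hqm : q ≤ 2 * m)
    (hmq : m ≤ q) :
    (m ! : ℝ) ^ (q / (2 * m)) ≤ exp 1 * √q * (q / exp 1) ^ (q / 2) := by
  have hm0 : (0 : ℝ) < m := by positivity
  have hexp : q / (2 * m) ≤ 1 := (div_le_one (by positivity)).mpr hqm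
  have hone : 1 ≤ exp 1 * √m :=
    one_le_mul_of_one_le_of_one_le (one_le_exp zero_le_one)
      (Real.one_le_sqrt.mpr (by exact_mod_cast Nat.one_le_iff_ne_zero.mpr hm))
  calc (m ! : ℝ) ^ (q / (2 * m)) ≤ (exp 1 * √m * (m / exp 1) ^ m) ^ (q / (2 * m)) :=
        rpow_le_rpow (by positivity) (factorial_le_exp_one_mul_sqrt_mul_pow hm) (by positivity)
    _ = (exp 1 * √m) ^ (q / (2 * m)) * (m / exp 1) ^ (q / 2) := by
        rw [mul_rpow (by positivity) (by positivity), ← rpow_natCast, ← rpow_mul (by positivity)]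
        congr 2
        field_simp
    _ ≤ exp 1 * √m * (m / exp 1) ^ (q / 2) := by
        gcongr
        exact rpow_le_self_of_one_le hone hexp
    _ ≤ exp 1 * √q * (q / exp 1) ^ (q / 2) := by gcongr

theorem binomial_half_apply_toReal (k : ℕ) (i : Fin (k + 1)) :
    (PMF.binomial (1 / 2) (by norm_num) k i).toReal = (k.choose i : ℝ) / 2 ^ k := by
  have hi : (i : ℕ) ≤ k := Fin.is_le i
  rw [PMF.binomial_apply]
  simp only [Fin.val_last, ENNReal.toReal_mul, ENNReal.toReal_pow, ENNReal.toReal_natCast]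
  have hhalf : ((1 / 2 : NNReal) : ENNReal).toReal = 1 / 2 := by simp
  rw [ENNReal.toReal_sub_of_le (by simp) ENNReal.one_ne_top, hhalf, ENNReal.toReal_one,
    show (1 : ℝ) - 1 / 2 = 1 / 2 by norm_num, ← pow_add, Nat.add_sub_cancel' hi, one_div_pow]
  field_simp

theorem integral_binomial_half (k : ℕ) (f : ℕ → ℝ) :
    ∫ s, f s ∂(PMF.binomial (1 / 2) (by norm_num) k).toMeasure
      = ∑ s ∈ range (k + 1), (k.choose s : ℝ) / 2 ^ k * f s := by
  rw [PMF.integral_eq_sum, ← Fin.sum_univ_eq_sum_range (fun s => (k.choose s : ℝ) / 2 ^ k * f s)]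
  simp only [binomial_half_apply_toReal, smul_eq_mul]

/-- Centered absolute moment bound for `S ~ Binomial(k, 1/2)`: for every real `q > 3`,
`E[|S − E S|^q] ≤ 4√e · √q · (qk/(2e))^(q/2)`, where `E S = k/2`. -/
theorem binomial_centered_moment_bound (k : ℕ) (q : ℝ) (hq : 3 < q) :
    ∫ s, |((s : ℕ) : ℝ) - (k : ℝ) / 2| ^ q
        ∂((PMF.binomial (1/2) (by norm_num) k).toMeasure) ≤
      4 * Real.sqrt (Real.exp 1) * Real.sqrt q *
        (q * k / (2 * Real.exp 1)) ^ (q / 2) := by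
  have hq0 : 0 < q := by linarith
  set m := ⌈q / 2⌉₊
  have hm : m ≠ 0 := (Nat.ceil_pos.mpr (by positivity)).ne'
  have hqm : q ≤ 2 * m := by linarith [Nat.le_ceil (q / 2)]
  have hmq : (m : ℝ) ≤ q := by linarith [Nat.ceil_lt_add_one (by positivity : 0 ≤ q / 2)]
  have hsqrt_e : exp 1 ≤ 4 * √(exp 1) := by
    nth_rewrite 1 [← mul_self_sqrt (exp_pos 1).le]
    gcongr
    rw [sqrt_le_left (by norm_num)]
    linarith [exp_one_lt_d9]
  rw [integral_binomial_half k fun n => |(n : ℝ) - k / 2| ^ q]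
  calc ∑ s ∈ range (k + 1), (k.choose s : ℝ) / 2 ^ k * |(s : ℝ) - k / 2| ^ q
      ≤ (m ! : ℝ) ^ (q / (2 * m)) * ((k : ℝ) / 2) ^ (q / 2) :=
        sum_choose_div_mul_abs_sub_half_rpow_le k hm hq0 hqm
    _ ≤ exp 1 * √q * (q / exp 1) ^ (q / 2) * ((k : ℝ) / 2) ^ (q / 2) := by
        gcongr
        exact factorial_rpow_le hm hq0 hqm hmq
    _ ≤ 4 * √(exp 1) * √q * (q * k / (2 * exp 1)) ^ (q / 2) := by
        rw [show q * k / (2 * exp 1) = q / exp 1 * (k / 2) by ring,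
          mul_rpow (by positivity) (by positivity), ← mul_assoc]
        gcongr
end

section
/- Let X and Y be i.i.d. Poisson random variables with parameter λ > 0. Then for every real q > 3, E[|X − Y|^q] ≤ 2^(q/2+1) · e · √q · ((q/e)(2λ + q))^(q/2). -/
/-!
Since `e·u ≤ eᵘ`, every `y ≥ 0` satisfies `y^q ≤ (q/(e s))^q · e^{s y}`, so by the Poisson
moment generating function `E e^{tX} = exp(λ(eᵗ − 1))`,
`E|X − Y|^q ≤ (q/(e s))^q · E[e^{s(X−Y)} + e^{−s(X−Y)}] = 2 (q/(e s))^q · exp(2λ(cosh s − 1))`.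
With `s² = q / (2(2λ + q))` the exponent is at most `2λ s² ≤ q/2`, and `(q/(e s))^q · e^{q/2}`
is exactly `(2 (q/e) (2λ + q))^{q/2}`.
-/

open MeasureTheory ProbabilityTheory Real NNReal
open scoped Nat

lemma rpow_le_mul_exp_of_nonneg {q s y : ℝ} (hq : 0 < q) (hs : 0 < s) (hy : 0 ≤ y) :
    y ^ q ≤ (q / (exp 1 * s)) ^ q * exp (s * y) := by
  have hu : 0 ≤ exp 1 * (s * y / q) := by positivity
  calc y ^ q = (q / (exp 1 * s) * (exp 1 * (s * y / q))) ^ q := by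
        congr 1; field_simp
    _ = (q / (exp 1 * s)) ^ q * (exp 1 * (s * y / q)) ^ q := mul_rpow (by positivity) hu
    _ ≤ (q / (exp 1 * s)) ^ q * exp (s * y / q) ^ q := by
        gcongr; exact exp_one_mul_le_exp
    _ = (q / (exp 1 * s)) ^ q * exp (s * y) := by
        rw [← exp_mul, div_mul_cancel₀ _ hq.ne']

lemma abs_rpow_le_mul_exp_add_exp {q s : ℝ} (hq : 0 < q) (hs : 0 < s) (x : ℝ) :
    |x| ^ q ≤ (q / (exp 1 * s)) ^ q * (exp (s * x) + exp (-(s * x))) := by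
  calc |x| ^ q ≤ (q / (exp 1 * s)) ^ q * exp |s * x| := by
        rw [abs_mul, abs_of_pos hs]; exact rpow_le_mul_exp_of_nonneg hq hs (abs_nonneg x)
    _ ≤ _ := by gcongr; exact exp_abs_le _

lemma cosh_sub_one_le_sq {s : ℝ} (hs : s ^ 2 ≤ 2) : cosh s - 1 ≤ s ^ 2 := by
  have h : |s ^ 2 / 2| ≤ 1 := by rw [abs_of_nonneg (by positivity)]; linarith
  calc cosh s - 1 ≤ exp (s ^ 2 / 2) - 1 := by linarith [cosh_le_exp_half_sq s]
    _ ≤ |exp (s ^ 2 / 2) - 1| := le_abs_self _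
    _ ≤ 2 * |s ^ 2 / 2| := abs_exp_sub_one_le h
    _ = s ^ 2 := by rw [abs_of_nonneg (by positivity)]; ring

lemma hasSum_poissonMeasure_mul_exp (r : ℝ≥0) (t : ℝ) :
    HasSum (fun n : ℕ ↦ exp (-r) * r ^ n / n ! * exp (t * n)) (exp (r * (exp t - 1))) := by
  have h := (NormedSpace.expSeries_div_hasSum_exp ((r : ℝ) * exp t)).mul_left (exp (-r))
  rw [← exp_eq_exp_ℝ, ← exp_add] at h
  have hterm : (fun n : ℕ ↦ exp (-r) * r ^ n / n ! * exp (t * n)) =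
      fun n ↦ exp (-r) * ((r * exp t) ^ n / n !) := by
    ext n; rw [mul_pow, ← exp_nat_mul, mul_comm (n : ℝ)]; ring
  rwa [hterm, show (r : ℝ) * (exp t - 1) = -r + r * exp t by ring]

lemma integrable_exp_mul_poissonMeasure (r : ℝ≥0) (t : ℝ) :
    Integrable (fun n : ℕ ↦ exp (t * n)) Po(r) := by
  simpa only [integrable_poissonMeasure_iff, norm_eq_abs, abs_exp]
    using (hasSum_poissonMeasure_mul_exp r t).summable

lemma integral_exp_mul_poissonMeasure (r : ℝ≥0) (t : ℝ) :
    ∫ n : ℕ, exp (t * n) ∂Po(r) = exp (r * (exp t - 1)) := by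
  rw [integral_poissonMeasure]
  exact (hasSum_poissonMeasure_mul_exp r t).tsum_eq

lemma exp_mul_sub_eq_mul (t a b : ℝ) : exp (t * (a - b)) = exp (t * a) * exp (-t * b) := by
  rw [← exp_add]; ring_nf

lemma integrable_exp_mul_sub_prod_poissonMeasure (r₁ r₂ : ℝ≥0) (t : ℝ) :
    Integrable (fun p : ℕ × ℕ ↦ exp (t * ((p.1 : ℝ) - p.2))) (Po(r₁).prod Po(r₂)) := by
  simpa only [exp_mul_sub_eq_mul] using
    (integrable_exp_mul_poissonMeasure r₁ t).mul_prod
      (integrable_exp_mul_poissonMeasure r₂ (-t))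

lemma integral_exp_mul_sub_prod_poissonMeasure (r₁ r₂ : ℝ≥0) (t : ℝ) :
    ∫ p : ℕ × ℕ, exp (t * ((p.1 : ℝ) - p.2)) ∂(Po(r₁).prod Po(r₂)) =
      exp (r₁ * (exp t - 1) + r₂ * (exp (-t) - 1)) := by
  simp only [exp_mul_sub_eq_mul]
  rw [integral_prod_mul (fun n : ℕ ↦ exp (t * n)) (fun n : ℕ ↦ exp (-t * n)),
    integral_exp_mul_poissonMeasure, integral_exp_mul_poissonMeasure, exp_add]

lemma integral_abs_sub_rpow_prod_poissonMeasure_le (r : ℝ≥0) {q s : ℝ} (hq : 0 < q)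
    (hs : 0 < s) :
    ∫ p : ℕ × ℕ, |(p.1 : ℝ) - p.2| ^ q ∂(Po(r).prod Po(r)) ≤
      (q / (exp 1 * s)) ^ q * (2 * exp (2 * r * (cosh s - 1))) := by
  have hint (t : ℝ) := integrable_exp_mul_sub_prod_poissonMeasure r r t
  calc ∫ p : ℕ × ℕ, |(p.1 : ℝ) - p.2| ^ q ∂(Po(r).prod Po(r))
      ≤ ∫ p : ℕ × ℕ, (q / (exp 1 * s)) ^ q *
          (exp (s * ((p.1 : ℝ) - p.2)) + exp (-s * ((p.1 : ℝ) - p.2)))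
          ∂(Po(r).prod Po(r)) := by
        refine integral_mono_of_nonneg (.of_forall fun _ ↦ by positivity)
          (((hint s).add (hint (-s))).const_mul _) (.of_forall fun p ↦ ?_)
        simpa only [neg_mul] using abs_rpow_le_mul_exp_add_exp hq hs ((p.1 : ℝ) - p.2)
    _ = (q / (exp 1 * s)) ^ q * (2 * exp (2 * r * (cosh s - 1))) := by
        rw [integral_const_mul, integral_add (hint s) (hint (-s)),
          integral_exp_mul_sub_prod_poissonMeasure, integral_exp_mul_sub_prod_poissonMeasure,
          cosh_eq, neg_neg]
        ring_nf

lemma div_exp_one_mul_rpow_mul_exp_half {q s A : ℝ} (hq : 0 < q) (hs : 0 < s) (hA : 0 < A)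
    (hsA : s ^ 2 = q / (2 * A)) :
    (q / (exp 1 * s)) ^ q * exp (q / 2) = (2 * (q / exp 1 * A)) ^ (q / 2) := by
  have hsq : (q / (exp 1 * s)) ^ q = ((q / (exp 1 * s)) ^ 2) ^ (q / 2) := by
    rw [← Real.rpow_natCast, ← rpow_mul (by positivity)]; ring_nf
  rw [hsq, ← exp_one_rpow (q / 2), ← mul_rpow (by positivity) (by positivity)]
  congr 1
  rw [div_pow, mul_pow, hsA]
  field_simp

theorem poisson_diff_moment_bound_general (lam : ℝ≥0) (q : ℝ) (hq : 3 < q) :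
    ∫ p : ℕ × ℕ, |(p.1 : ℝ) - (p.2 : ℝ)| ^ q
        ∂((poissonMeasure lam).prod (poissonMeasure lam)) ≤
      2 ^ (q / 2 + 1) * Real.exp 1 * Real.sqrt q *
        (q / Real.exp 1 * (2 * (lam : ℝ) + q)) ^ (q / 2) := by
  have hq0 : 0 < q := by linarith
  set A := 2 * (lam : ℝ) + q with hA_def
  have hlamA : 2 * lam ≤ A := by linarith
  have hA : 0 < A := by positivity
  set s := √(q / (2 * A))
  have hs : 0 < s := by positivity
  have hsA : s ^ 2 = q / (2 * A) := sq_sqrt (by positivity)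
  have hexponent : 2 * lam * (cosh s - 1) ≤ q / 2 := by
    have hs2 : s ^ 2 ≤ 2 := by rw [hsA, div_le_iff₀ (by positivity)]; linarith
    calc 2 * lam * (cosh s - 1) ≤ 2 * lam * s ^ 2 := by gcongr; exact cosh_sub_one_le_sq hs2
      _ = q / 2 * (2 * lam / A) := by rw [hsA]; field_simp
      _ ≤ q / 2 := mul_le_of_le_one_right (by positivity) ((div_le_one hA).2 hlamA)
  have he_sqrt : 1 ≤ exp 1 * √q :=
    one_le_mul_of_one_le_of_one_le (one_le_exp zero_le_one) (one_le_sqrt.2 (by linarith))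
  calc _ ≤ (q / (exp 1 * s)) ^ q * (2 * exp (2 * lam * (cosh s - 1))) :=
        integral_abs_sub_rpow_prod_poissonMeasure_le lam hq0 hs
    _ ≤ 2 * ((q / (exp 1 * s)) ^ q * exp (q / 2)) := by
        rw [mul_left_comm]; gcongr
    _ = 2 * 2 ^ (q / 2) * (q / exp 1 * A) ^ (q / 2) := by
        rw [div_exp_one_mul_rpow_mul_exp_half hq0 hs hA hsA, mul_rpow zero_le_two (by positivity)]
        ring
    _ ≤ _ := by
        rw [Real.rpow_add_one two_ne_zero]
        have : 0 ≤ 2 * 2 ^ (q / 2) * (q / exp 1 * A) ^ (q / 2) := by positivity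
        nlinarith

/-- Moment bound for the difference of two i.i.d. Poisson(λ) random variables:
for every real `q > 3`, `E[|X − Y|^q] ≤ 2^(q/2+1) · e · √q · ((q/e)(2λ + q))^(q/2)`. -/
theorem poisson_diff_moment_bound (lam : ℝ≥0) (hlam : 0 < lam) (q : ℝ) (hq : 3 < q) :
    ∫ p : ℕ × ℕ, |(p.1 : ℝ) - (p.2 : ℝ)| ^ q
        ∂((poissonMeasure lam).prod (poissonMeasure lam)) ≤
      2 ^ (q / 2 + 1) * Real.exp 1 * Real.sqrt q *
        (q / Real.exp 1 * (2 * (lam : ℝ) + q)) ^ (q / 2) :=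
  poisson_diff_moment_bound_general lam q hq
end

section
/- Let h : 𝒳^m → ℝ be a symmetric measurable function, m ≤ n, and define the U-statistic Uₙ(x₁,…,xₙ) = C(n,m)^(−1) ∑_{1≤i₁<…<i_m≤n} h(x_{i₁},…,x_{i_m}). Define W(x₁,…,xₙ) = (1/r) ∑_{j=1}^r h(x_{(j−1)m+1},…,x_{jm}) with r = ⌊n/m⌋. Then Uₙ(x₁,…,xₙ) = (1/n!) ∑_σ W(x_{σ(1)},…,x_{σ(n)}), where the sum runs over all permutations σ of {1,…,n}. -/
set_option autoImplicit false

open Finset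

/-! Symmetry of `h` makes `h (x ∘ σ ∘ ι)`, for an injection `ι : Fin m → Fin n`, a function of the
`m`-subset `σ '' range ι` alone. Permutations act transitively on `m`-subsets, so double counting
pairs (permutation, subset) gives `C(n,m) · ∑_σ h (x ∘ σ ∘ ι) = n! · ∑_{#t = m} h (x_t)` for every
injection `ι`. Each of the `⌊n/m⌋` blocks of `W` is such an injection. -/

/-- Index of the `i`-th coordinate of the `j`-th block of size `m` inside `Fin n`. -/
def blockIdx (n m : ℕ) (j : Fin (n / m)) (i : Fin m) : Fin n :=
  ⟨j.1 * m + i.1, by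
    have h1 : j.1 * m + i.1 < (j.1 + 1) * m := by
      have := i.2; ring_nf; omega
    have h2 : (j.1 + 1) * m ≤ (n / m) * m := Nat.mul_le_mul_right m j.2
    exact lt_of_lt_of_le h1 (le_trans h2 (Nat.div_mul_le_self n m))⟩

open scoped Pointwise

theorem Finset.card_nsmul_sum_smul_eq {G α M : Type*} [Group G] [Fintype G] [MulAction G α]
    [AddCommMonoid M] (f : α → M) {s : Finset α} (hs : ∀ g : G, ∀ b ∈ s, g • b ∈ s) {a : α}
    (ha : ∀ b ∈ s, b ∈ MulAction.orbit G a) :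
    #s • ∑ g : G, f (g • a) = Fintype.card G • ∑ b ∈ s, f b := by
  have orbit_sum : ∀ b ∈ s, ∑ g : G, f (g • b) = ∑ g : G, f (g • a) := by
    intro b hb
    obtain ⟨k, rfl⟩ := ha b hb
    exact Fintype.sum_equiv (Equiv.mulRight k) _ _ fun g => by simp [mul_smul]
  have translate_sum : ∀ g : G, ∑ b ∈ s, f (g • b) = ∑ b ∈ s, f b := fun g =>
    sum_nbij' (g • ·) (g⁻¹ • ·) (hs g) (hs g⁻¹) (by simp) (by simp) fun _ _ => rfl
  calc #s • ∑ g : G, f (g • a) = ∑ b ∈ s, ∑ g : G, f (g • b) := by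
        rw [← sum_const, sum_congr rfl orbit_sum]
    _ = ∑ g : G, ∑ b ∈ s, f (g • b) := sum_comm
    _ = Fintype.card G • ∑ b ∈ s, f b := by
        rw [sum_congr rfl fun g _ => translate_sum g, sum_const, card_univ]

theorem Finset.mem_orbit_perm_of_card_eq {α : Type*} [DecidableEq α] {s t : Finset α}
    (hst : #s = #t) : t ∈ MulAction.orbit (Equiv.Perm α) s := by
  have := Set.powersetCard.isPretransitive (α := α) (n := #s)
  obtain ⟨σ, hσ⟩ := MulAction.exists_smul_eq (Equiv.Perm α)
    (⟨s, rfl⟩ : Set.powersetCard α #s) ⟨t, hst.symm⟩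
  exact ⟨σ, congrArg Subtype.val hσ⟩

section Kernel

variable {𝒳 β : Type*} {m : ℕ} {h : (Fin m → 𝒳) → ℝ}

lemma apply_comp_eq_of_range_eq
    (hsym : ∀ (σ : Equiv.Perm (Fin m)) (y : Fin m → 𝒳), h (y ∘ σ) = h y) (y : β → 𝒳)
    {ι ι' : Fin m → β} (hι : Function.Injective ι) (hι' : Function.Injective ι')
    (hrange : Set.range ι = Set.range ι') :
    h (y ∘ ι) = h (y ∘ ι') := by
  let τ : Equiv.Perm (Fin m) :=
    (Equiv.ofInjective ι hι).trans ((Equiv.setCongr hrange).trans (Equiv.ofInjective ι' hι').symm)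
  have hτ : ι' ∘ τ = ι := funext fun i => by simp [τ, Equiv.apply_ofInjective_symm]
  rw [← hτ, ← hsym τ (y ∘ ι')]
  rfl

variable [LinearOrder β]

noncomputable def subsampleKernel (h : (Fin m → 𝒳) → ℝ) (x : β → 𝒳) (t : Finset β) : ℝ :=
  if ht : #t = m then h (fun i => x (t.orderEmbOfFin ht i)) else 0

lemma apply_comp_eq_subsampleKernel
    (hsym : ∀ (σ : Equiv.Perm (Fin m)) (y : Fin m → 𝒳), h (y ∘ σ) = h y) (x : β → 𝒳)
    {ι : Fin m → β} (hι : Function.Injective ι) :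
    h (fun i => x (ι i)) = subsampleKernel h x (univ.image ι) := by
  have hcard : #(univ.image ι) = m := by
    rw [card_image_of_injective _ hι, card_univ, Fintype.card_fin]
  rw [subsampleKernel, dif_pos hcard]
  refine apply_comp_eq_of_range_eq hsym x hι (orderEmbOfFin _ hcard).injective ?_
  rw [range_orderEmbOfFin, coe_image, coe_univ, Set.image_univ]

lemma choose_mul_sum_perm_eq {n : ℕ}
    (hsym : ∀ (σ : Equiv.Perm (Fin m)) (y : Fin m → 𝒳), h (y ∘ σ) = h y) (x : Fin n → 𝒳)
    {ι : Fin m → Fin n} (hι : Function.Injective ι) :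
    (n.choose m : ℝ) * ∑ σ : Equiv.Perm (Fin n), h (fun i => x (σ (ι i))) =
      n.factorial * ∑ t ∈ powersetCard m univ, subsampleKernel h x t := by
  have translate : ∀ σ : Equiv.Perm (Fin n),
      h (fun i => x (σ (ι i))) = subsampleKernel h x (σ • univ.image ι) := fun σ => by
    rw [apply_comp_eq_subsampleKernel hsym x (ι := fun i => σ (ι i)) (σ.injective.comp hι),
      smul_finset_def, image_image]
    rfl
  have invariant : ∀ σ : Equiv.Perm (Fin n), ∀ t ∈ powersetCard m (univ : Finset (Fin n)),
      σ • t ∈ powersetCard m univ := fun σ t ht => by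
    rw [mem_powersetCard] at ht ⊢
    exact ⟨subset_univ _, (card_smul_finset σ t).trans ht.2⟩
  have transitive : ∀ t ∈ powersetCard m (univ : Finset (Fin n)),
      t ∈ MulAction.orbit (Equiv.Perm (Fin n)) (univ.image ι) := fun t ht =>
    mem_orbit_perm_of_card_eq <| by
      rw [card_image_of_injective _ hι, card_univ, Fintype.card_fin, (mem_powersetCard.mp ht).2]
  have := card_nsmul_sum_smul_eq (subsampleKernel h x) invariant transitive
  rw [card_powersetCard, card_univ, Fintype.card_fin, Fintype.card_perm, Fintype.card_fin,
    nsmul_eq_mul, nsmul_eq_mul] at this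
  simpa only [translate] using this

end Kernel

lemma blockIdx_injective (n m : ℕ) (j : Fin (n / m)) : Function.Injective (blockIdx n m j) :=
  fun i i' hii' => Fin.ext (by simpa [blockIdx] using hii')

/-- Hoeffding's representation of a U-statistic: for a symmetric kernel `h` of order `m ≤ n`,
the U-statistic `Uₙ(x) = C(n,m)⁻¹ ∑_{i₁<…<i_m} h(x_{i₁},…,x_{i_m})` equals the average over all
permutations `σ` of `{1,…,n}` of `W(x_{σ(1)},…,x_{σ(n)})`, where
`W(x₁,…,xₙ) = r⁻¹ ∑_{j=1}^r h(x_{(j−1)m+1},…,x_{jm})` and `r = ⌊n/m⌋`. -/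
theorem hoeffding_representation {𝒳 : Type*} (n m : ℕ) (hm : 0 < m) (hmn : m ≤ n)
    (h : (Fin m → 𝒳) → ℝ)
    (hsym : ∀ (σ : Equiv.Perm (Fin m)) (y : Fin m → 𝒳), h (y ∘ σ) = h y)
    (x : Fin n → 𝒳) :
    ((n.choose m : ℝ))⁻¹ *
        ∑ s ∈ (Finset.powersetCard m (Finset.univ : Finset (Fin n))).attach,
          h (fun i => x ((s.1.orderIsoOfFin (Finset.mem_powersetCard.mp s.2).2 i : Fin n))) =
      ((n.factorial : ℝ))⁻¹ *
        ∑ σ : Equiv.Perm (Fin n),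
          ((n / m : ℕ) : ℝ)⁻¹ *
            ∑ j : Fin (n / m), h (fun i => x (σ (blockIdx n m j i))) := by
  have hC : (n.choose m : ℝ) ≠ 0 := Nat.cast_ne_zero.mpr (Nat.choose_pos hmn).ne'
  have hr : ((n / m : ℕ) : ℝ) ≠ 0 := Nat.cast_ne_zero.mpr (Nat.div_pos hmn hm).ne'
  have lhs : ∑ s ∈ (powersetCard m (univ : Finset (Fin n))).attach,
      h (fun i => x (s.1.orderIsoOfFin (mem_powersetCard.mp s.2).2 i)) =
        ∑ t ∈ powersetCard m univ, subsampleKernel h x t := by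
    rw [← sum_attach (powersetCard m univ) (subsampleKernel h x)]
    refine sum_congr rfl fun s _ => ?_
    simp only [subsampleKernel, dif_pos (mem_powersetCard.mp s.2).2, coe_orderIsoOfFin_apply]
  have block_sum : ∀ j : Fin (n / m),
      ∑ σ : Equiv.Perm (Fin n), h (fun i => x (σ (blockIdx n m j i))) =
        n.factorial / n.choose m * ∑ t ∈ powersetCard m univ, subsampleKernel h x t :=
    fun j => by
      rw [div_mul_eq_mul_div, eq_div_iff hC, mul_comm,
        choose_mul_sum_perm_eq hsym x (blockIdx_injective n m j)]
  rw [lhs, ← mul_sum, sum_comm, sum_congr rfl fun j _ => block_sum j, sum_const, card_univ,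
    Fintype.card_fin, nsmul_eq_mul]
  field_simp
end

section
/- Let X₁,…,Xₙ be independent random variables and Z = f(X₁,…,Xₙ) square-integrable. Then Var(Z) ≤ (1/2) ∑ᵢ₌₁ⁿ E[(Z − Z'ᵢ)²], where Z'ᵢ = f(X₁,…,X'ᵢ,…,Xₙ) and X'₁,…,X'ₙ are independent copies of X₁,…,Xₙ. -/
/-!
Write `Eᵢ g` for `g` with its `i`-th coordinate integrated out, i.e. the conditional expectation
of `g` given all the other coordinates. Each `Eᵢ` is an orthogonal projection on `L²`, so
`∫ (g - Eᵢ g)² = ∫ g² - ∫ (Eᵢ g)²`, and by Fubini the `Eᵢ` commute. Integrating the coordinates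
out one by one (`E_l = E_{l₁} ⋯ E_{lₖ}`) ends at the constant `∫ g`, so `Var g` telescopes into
the sum of the terms `∫ (E_l g - Eᵢ E_l g)² = ∫ (E_l (g - Eᵢ g))² ≤ ∫ (g - Eᵢ g)²` over the
steps `i :: l`. Finally `E (Z - Z'ᵢ)² = 2 ∫ (g - Eᵢ g)²`, since `Z'ᵢ` is a second draw of the
`i`-th coordinate with the others kept.
-/

open MeasureTheory ProbabilityTheory Function Set

section L2

variable {α β : Type*} [MeasurableSpace α] [MeasurableSpace β] {μ : Measure α}

theorem MeasureTheory.MeasurePreserving.integral_comp_of_aestronglyMeasurable {ν : Measure β}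
    {u : α → β} (hu : MeasurePreserving u μ ν) {g : β → ℝ} (hg : AEStronglyMeasurable g ν) :
    ∫ x, g (u x) ∂μ = ∫ y, g y ∂ν := by
  rw [← hu.map_eq] at hg ⊢
  exact (integral_map hu.aemeasurable hg).symm

theorem integral_sub_sq {g h : α → ℝ} (hg : MemLp g 2 μ) (hh : MemLp h 2 μ) :
    ∫ x, (g x - h x) ^ 2 ∂μ
      = ∫ x, g x ^ 2 ∂μ - 2 * ∫ x, g x * h x ∂μ + ∫ x, h x ^ 2 ∂μ := by
  have hgh : Integrable (fun x => 2 * (g x * h x)) μ := (hg.integrable_mul hh).const_mul 2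
  calc ∫ x, (g x - h x) ^ 2 ∂μ = ∫ x, (g x ^ 2 - 2 * (g x * h x) + h x ^ 2) ∂μ := by
        congr with x; ring
    _ = _ := by
        rw [integral_add (f := fun x => g x ^ 2 - 2 * (g x * h x)) (hg.integrable_sq.sub hgh)
            hh.integrable_sq,
          integral_sub hg.integrable_sq hgh, integral_const_mul]

theorem sq_integral_le_integral_sq [IsProbabilityMeasure μ] {g : α → ℝ} (hg : MemLp g 2 μ) :
    (∫ x, g x ∂μ) ^ 2 ≤ ∫ x, g x ^ 2 ∂μ := by
  have := variance_nonneg g μ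
  rw [variance_eq_sub hg] at this
  simpa using this

end L2

section CoordAvg

variable {ι : Type*} [DecidableEq ι] {X : ι → Type*} [∀ i, MeasurableSpace (X i)]
  {μ : ∀ i, Measure (X i)}

variable (μ) in
noncomputable def coordAvg (i : ι) (g : (∀ j, X j) → ℝ) (x : ∀ j, X j) : ℝ :=
  ∫ y, g (update x i y) ∂μ i

variable (μ) in
noncomputable def iterAvg (l : List ι) (g : (∀ j, X j) → ℝ) : (∀ j, X j) → ℝ :=
  l.foldr (coordAvg μ) g

variable {i j : ι} {g h : (∀ j, X j) → ℝ}

@[simp]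
theorem coordAvg_update (x : ∀ j, X j) (y : X i) :
    coordAvg μ i g (update x i y) = coordAvg μ i g x := by
  simp only [coordAvg, update_idem]

theorem coordAvg_mul_coordAvg :
    coordAvg μ i (fun x => g x * coordAvg μ i h x)
      = fun x => coordAvg μ i g x * coordAvg μ i h x := by
  ext x
  change ∫ y, g (update x i y) * coordAvg μ i h (update x i y) ∂μ i = _
  simp only [coordAvg_update]
  exact integral_mul_const _ _

@[simp]
theorem iterAvg_nil : iterAvg μ [] g = g := rfl

@[simp]
theorem iterAvg_cons (l : List ι) : iterAvg μ (i :: l) g = coordAvg μ i (iterAvg μ l g) := rfl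

theorem iterAvg_eq_of_eqOn_compl :
    ∀ (l : List ι) {x x' : ∀ j, X j}, (∀ j ∉ l, x j = x' j) → iterAvg μ l g x = iterAvg μ l g x'
  | [], x, x', h => by rw [funext fun j => h j List.not_mem_nil]
  | i :: l, x, x', h => integral_congr_ae <| .of_forall fun y => by
      refine iterAvg_eq_of_eqOn_compl l fun j hj => ?_
      rcases eq_or_ne j i with rfl | hji
      · simp
      · simpa [hji] using h j (by simp [hji, hj])

variable [Fintype ι] [∀ i, IsProbabilityMeasure (μ i)]

variable (μ) in
theorem measurePreserving_update (i : ι) :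
    MeasurePreserving (fun p : (∀ j, X j) × X i => update p.1 i p.2)
      ((Measure.pi μ).prod (μ i)) (Measure.pi μ) := by
  refine ⟨measurable_update', (Measure.pi_eq fun s hs => ?_).symm⟩
  have hpre : (fun p : (∀ j, X j) × X i => update p.1 i p.2) ⁻¹' univ.pi s
      = univ.pi (update s i univ) ×ˢ s i := by
    ext ⟨x, y⟩
    simp only [mem_preimage, mem_pi, mem_univ, true_implies, mem_prod]
    refine ⟨fun h => ⟨fun j => ?_, by simpa using h i⟩, fun ⟨hx, hy⟩ j => ?_⟩
    · rcases eq_or_ne j i with rfl | hj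
      · simp
      · simpa [hj] using h j
    · rcases eq_or_ne j i with rfl | hj
      · simpa using hy
      · simpa [hj] using hx j
  rw [Measure.map_apply measurable_update' (.univ_pi hs), hpre, Measure.prod_prod, Measure.pi_pi,
    ← Finset.mul_prod_erase _ _ (Finset.mem_univ i), update_self, measure_univ, one_mul,
    ← Finset.prod_erase_mul _ _ (Finset.mem_univ i)]
  congr 1
  refine Finset.prod_congr rfl fun j hj => ?_
  rw [update_of_ne (Finset.ne_of_mem_erase hj)]

variable (μ) in
theorem measurePreserving_update_update (i j : ι) :
    MeasurePreserving (fun q : (∀ k, X k) × X i × X j => update (update q.1 i q.2.1) j q.2.2)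
      ((Measure.pi μ).prod ((μ i).prod (μ j))) (Measure.pi μ) :=
  (measurePreserving_update μ j).comp <|
    ((measurePreserving_update μ i).prod (.id (μ j))).comp
      (measurePreserving_prodAssoc (Measure.pi μ) (μ i) (μ j)).symm

theorem memLp_comp_update {p : ENNReal} (hg : MemLp g p (Measure.pi μ)) (i : ι) :
    MemLp (fun q : (∀ j, X j) × X i => g (update q.1 i q.2)) p ((Measure.pi μ).prod (μ i)) :=
  hg.comp_measurePreserving (measurePreserving_update μ i)

theorem integrable_comp_update (hg : Integrable g (Measure.pi μ)) (i : ι) :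
    Integrable (fun q : (∀ j, X j) × X i => g (update q.1 i q.2))
      ((Measure.pi μ).prod (μ i)) :=
  (measurePreserving_update μ i).integrable_comp_of_integrable hg

theorem aestronglyMeasurable_coordAvg (hg : AEStronglyMeasurable g (Measure.pi μ)) (i : ι) :
    AEStronglyMeasurable (coordAvg μ i g) (Measure.pi μ) :=
  (hg.comp_measurePreserving (measurePreserving_update μ i)).integral_prod_right'

theorem integrable_coordAvg (hg : Integrable g (Measure.pi μ)) (i : ι) :
    Integrable (coordAvg μ i g) (Measure.pi μ) :=
  (integrable_comp_update hg i).integral_prod_left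

theorem integral_coordAvg (hg : Integrable g (Measure.pi μ)) (i : ι) :
    ∫ x, coordAvg μ i g x ∂Measure.pi μ = ∫ x, g x ∂Measure.pi μ := by
  rw [← (measurePreserving_update μ i).integral_comp_of_aestronglyMeasurable
    hg.aestronglyMeasurable]
  exact (integral_prod _ (integrable_comp_update hg i)).symm

theorem sq_coordAvg_le (hg : MemLp g 2 (Measure.pi μ)) (i : ι) :
    ∀ᵐ x ∂Measure.pi μ, coordAvg μ i g x ^ 2 ≤ coordAvg μ i (fun x => g x ^ 2) x := by
  filter_upwards [(memLp_comp_update hg i).integrable_sq.prod_right_ae,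
    (memLp_comp_update hg i).aestronglyMeasurable.prodMk_left] with x hsq hmeas
  exact sq_integral_le_integral_sq ((memLp_two_iff_integrable_sq hmeas).2 hsq)

theorem memLp_coordAvg (hg : MemLp g 2 (Measure.pi μ)) (i : ι) :
    MemLp (coordAvg μ i g) 2 (Measure.pi μ) := by
  have hmeas := aestronglyMeasurable_coordAvg hg.aestronglyMeasurable i
  refine (memLp_two_iff_integrable_sq hmeas).2 <|
    (integrable_coordAvg hg.integrable_sq i).mono' (hmeas.pow 2) ?_
  filter_upwards [sq_coordAvg_le hg i] with x hx
  rwa [Real.norm_of_nonneg (sq_nonneg _)]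

theorem integral_sq_coordAvg_le (hg : MemLp g 2 (Measure.pi μ)) (i : ι) :
    ∫ x, coordAvg μ i g x ^ 2 ∂Measure.pi μ ≤ ∫ x, g x ^ 2 ∂Measure.pi μ := by
  rw [← integral_coordAvg hg.integrable_sq i]
  exact integral_mono_ae (memLp_coordAvg hg i).integrable_sq
    (integrable_coordAvg hg.integrable_sq i) (sq_coordAvg_le hg i)

theorem integral_mul_coordAvg (hg : MemLp g 2 (Measure.pi μ)) (i : ι) :
    ∫ x, g x * coordAvg μ i g x ∂Measure.pi μ = ∫ x, coordAvg μ i g x ^ 2 ∂Measure.pi μ := by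
  rw [← integral_coordAvg (g := fun x => g x * coordAvg μ i g x)
    (hg.integrable_mul (memLp_coordAvg hg i)) i, coordAvg_mul_coordAvg]
  simp only [sq]

theorem integral_sub_coordAvg_sq (hg : MemLp g 2 (Measure.pi μ)) (i : ι) :
    ∫ x, (g x - coordAvg μ i g x) ^ 2 ∂Measure.pi μ
      = ∫ x, g x ^ 2 ∂Measure.pi μ - ∫ x, coordAvg μ i g x ^ 2 ∂Measure.pi μ := by
  rw [integral_sub_sq hg (memLp_coordAvg hg i), integral_mul_coordAvg hg]
  ring

theorem coordAvg_comm (hij : i ≠ j) (hg : Integrable g (Measure.pi μ)) :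
    coordAvg μ i (coordAvg μ j g) =ᵐ[Measure.pi μ] coordAvg μ j (coordAvg μ i g) := by
  have hint := (measurePreserving_update_update μ i j).integrable_comp_of_integrable hg
  filter_upwards [hint.prod_right_ae] with x hx
  simp only [coordAvg]
  rw [integral_integral_swap hx]
  simp only [update_comm hij]

theorem coordAvg_sub (hg : Integrable g (Measure.pi μ)) (hh : Integrable h (Measure.pi μ))
    (i : ι) :
    coordAvg μ i (fun x => g x - h x)
      =ᵐ[Measure.pi μ] fun x => coordAvg μ i g x - coordAvg μ i h x := by
  filter_upwards [(integrable_comp_update hg i).prod_right_ae,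
    (integrable_comp_update hh i).prod_right_ae] with x hgx hhx
  exact integral_sub hgx hhx

theorem integral_sub_coordAvg_sq_coordAvg_le (hij : i ≠ j) (hh : MemLp h 2 (Measure.pi μ)) :
    ∫ x, (coordAvg μ j h x - coordAvg μ i (coordAvg μ j h) x) ^ 2 ∂Measure.pi μ
      ≤ ∫ x, (h x - coordAvg μ i h x) ^ 2 ∂Measure.pi μ := by
  have hih := memLp_coordAvg hh i
  have hcomm : (fun x => coordAvg μ j h x - coordAvg μ i (coordAvg μ j h) x)
      =ᵐ[Measure.pi μ] coordAvg μ j (fun x => h x - coordAvg μ i h x) := by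
    filter_upwards [coordAvg_comm hij (hh.integrable one_le_two),
      coordAvg_sub (hh.integrable one_le_two) (hih.integrable one_le_two) j] with x hc hs
    rw [hc, hs]
  calc _ = ∫ x, coordAvg μ j (fun x => h x - coordAvg μ i h x) x ^ 2 ∂Measure.pi μ :=
        integral_congr_ae (hcomm.fun_comp (· ^ 2))
    _ ≤ _ := integral_sq_coordAvg_le (hh.sub hih) j

theorem integral_sq_sub_update_eq (hg : MemLp g 2 (Measure.pi μ)) (i : ι) :
    ∫ ω, (g ω.1 - g (update ω.1 i (ω.2 i))) ^ 2 ∂(Measure.pi μ).prod (Measure.pi μ)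
      = 2 * ∫ x, (g x - coordAvg μ i g x) ^ 2 ∂Measure.pi μ := by
  have hfst : MeasurePreserving Prod.fst ((Measure.pi μ).prod (μ i)) (Measure.pi μ) :=
    measurePreserving_fst
  have hg₁ : MemLp (fun q : (∀ j, X j) × X i => g q.1) 2 ((Measure.pi μ).prod (μ i)) :=
    hg.comp_measurePreserving hfst
  have hg₂ := memLp_comp_update hg i
  have hsq₁ : ∫ q, g q.1 ^ 2 ∂(Measure.pi μ).prod (μ i) = ∫ x, g x ^ 2 ∂Measure.pi μ :=
    hfst.integral_comp_of_aestronglyMeasurable hg.integrable_sq.aestronglyMeasurable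
  have hsq₂ : ∫ q, g (update q.1 i q.2) ^ 2 ∂(Measure.pi μ).prod (μ i)
      = ∫ x, g x ^ 2 ∂Measure.pi μ :=
    (measurePreserving_update μ i).integral_comp_of_aestronglyMeasurable
      hg.integrable_sq.aestronglyMeasurable
  have hmul : ∫ q, g q.1 * g (update q.1 i q.2) ∂(Measure.pi μ).prod (μ i)
      = ∫ x, g x * coordAvg μ i g x ∂Measure.pi μ := by
    have hint : Integrable (fun q : (∀ j, X j) × X i => g q.1 * g (update q.1 i q.2))
        ((Measure.pi μ).prod (μ i)) := hg₁.integrable_mul hg₂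
    rw [integral_prod _ hint]
    exact integral_congr_ae (.of_forall fun x => integral_const_mul (g x) _)
  have hevalᵢ : MeasurePreserving (Prod.map id (eval i))
      ((Measure.pi μ).prod (Measure.pi μ)) ((Measure.pi μ).prod (μ i)) :=
    (MeasurePreserving.id _).prod (measurePreserving_eval μ i)
  have htransport :
      ∫ ω, (g ω.1 - g (update ω.1 i (ω.2 i))) ^ 2 ∂(Measure.pi μ).prod (Measure.pi μ)
        = ∫ q, (g q.1 - g (update q.1 i q.2)) ^ 2 ∂(Measure.pi μ).prod (μ i) :=
    hevalᵢ.integral_comp_of_aestronglyMeasurable ((hg₁.sub hg₂).aestronglyMeasurable.pow 2)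
  rw [htransport, integral_sub_sq hg₁ hg₂, hsq₁, hsq₂, hmul, integral_mul_coordAvg hg,
    integral_sub_coordAvg_sq hg]
  ring

theorem memLp_iterAvg (hg : MemLp g 2 (Measure.pi μ)) :
    ∀ l : List ι, MemLp (iterAvg μ l g) 2 (Measure.pi μ)
  | [] => hg
  | i :: l => memLp_coordAvg (memLp_iterAvg hg l) i

theorem integral_iterAvg (hg : MemLp g 2 (Measure.pi μ)) :
    ∀ l : List ι, ∫ x, iterAvg μ l g x ∂Measure.pi μ = ∫ x, g x ∂Measure.pi μ
  | [] => rfl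
  | i :: l => by
    rw [iterAvg_cons, integral_coordAvg ((memLp_iterAvg hg l).integrable one_le_two),
      integral_iterAvg hg l]

theorem integral_iterAvg_sq_of_forall_mem (hg : MemLp g 2 (Measure.pi μ)) {l : List ι}
    (hl : ∀ i, i ∈ l) :
    ∫ x, iterAvg μ l g x ^ 2 ∂Measure.pi μ = (∫ x, g x ∂Measure.pi μ) ^ 2 := by
  obtain ⟨x₀⟩ : Nonempty (∀ j, X j) := ⟨fun j => (nonempty_of_isProbabilityMeasure (μ j)).some⟩
  have hconst : iterAvg μ l g = fun _ => iterAvg μ l g x₀ :=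
    funext fun x => iterAvg_eq_of_eqOn_compl l fun j hj => absurd (hl j) hj
  have hmean := integral_iterAvg hg l
  rw [hconst] at hmean ⊢
  simp only [integral_const, probReal_univ, one_smul] at hmean ⊢
  rw [hmean]

theorem integral_sub_coordAvg_sq_iterAvg_le (hg : MemLp g 2 (Measure.pi μ)) :
    ∀ l : List ι, i ∉ l →
      ∫ x, (iterAvg μ l g x - coordAvg μ i (iterAvg μ l g) x) ^ 2 ∂Measure.pi μ
        ≤ ∫ x, (g x - coordAvg μ i g x) ^ 2 ∂Measure.pi μ
  | [], _ => le_rfl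
  | j :: l, hi => by
    rw [List.mem_cons, not_or] at hi
    exact (integral_sub_coordAvg_sq_coordAvg_le hi.1 (memLp_iterAvg hg l)).trans
      (integral_sub_coordAvg_sq_iterAvg_le hg l hi.2)

theorem integral_sq_sub_integral_iterAvg_sq_le (hg : MemLp g 2 (Measure.pi μ)) :
    ∀ l : List ι, l.Nodup →
      ∫ x, g x ^ 2 ∂Measure.pi μ - ∫ x, iterAvg μ l g x ^ 2 ∂Measure.pi μ
        ≤ (l.map fun i => ∫ x, (g x - coordAvg μ i g x) ^ 2 ∂Measure.pi μ).sum
  | [], _ => by simp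
  | i :: l, hl => by
    rw [List.nodup_cons] at hl
    have hstep := integral_sub_coordAvg_sq (memLp_iterAvg hg l) i
    have hcontr := integral_sub_coordAvg_sq_iterAvg_le hg l hl.1
    have ih := integral_sq_sub_integral_iterAvg_sq_le hg l hl.2
    rw [iterAvg_cons, List.map_cons, List.sum_cons]
    linarith

theorem variance_le_sum_integral_sub_coordAvg_sq (hg : MemLp g 2 (Measure.pi μ)) :
    variance g (Measure.pi μ) ≤ ∑ i, ∫ x, (g x - coordAvg μ i g x) ^ 2 ∂Measure.pi μ := by
  have h := integral_sq_sub_integral_iterAvg_sq_le hg _ (Finset.nodup_toList Finset.univ)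
  rw [integral_iterAvg_sq_of_forall_mem hg (by simp), Finset.sum_map_toList] at h
  rw [variance_eq_sub hg]
  simpa using h

end CoordAvg

theorem efron_stein_general {𝒳 : Type*} [MeasurableSpace 𝒳] (n : ℕ)
    (ν : Fin n → Measure 𝒳) [∀ i, IsProbabilityMeasure (ν i)]
    (f : (Fin n → 𝒳) → ℝ)
    (hf2 : MemLp f 2 (Measure.pi ν)) :
    variance (fun ω : (Fin n → 𝒳) × (Fin n → 𝒳) => f ω.1)
        ((Measure.pi ν).prod (Measure.pi ν)) ≤
      (1 : ℝ) / 2 * ∑ i : Fin n,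
        ∫ ω, (f ω.1 - f (Function.update ω.1 i (ω.2 i))) ^ 2
          ∂((Measure.pi ν).prod (Measure.pi ν)) := by
  rw [measurePreserving_fst.variance_fun_comp hf2.aestronglyMeasurable.aemeasurable]
  simp only [integral_sq_sub_update_eq hf2, ← Finset.mul_sum]
  linarith [variance_le_sum_integral_sub_coordAvg_sq hf2]

/-- The Efron–Stein inequality: for independent random variables `X₁,…,Xₙ` and a
square-integrable `Z = f(X₁,…,Xₙ)`,
`Var(Z) ≤ (1/2) ∑ᵢ E[(Z − Z'ᵢ)²]`, where `Z'ᵢ = f(X₁,…,X'ᵢ,…,Xₙ)` and the `X'ᵢ` are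
independent copies of the `Xᵢ`. -/
theorem efron_stein {𝒳 : Type*} [MeasurableSpace 𝒳] (n : ℕ)
    (ν : Fin n → Measure 𝒳) [∀ i, IsProbabilityMeasure (ν i)]
    (f : (Fin n → 𝒳) → ℝ) (hf : Measurable f)
    (hf2 : MemLp f 2 (Measure.pi ν)) :
    variance (fun ω : (Fin n → 𝒳) × (Fin n → 𝒳) => f ω.1)
        ((Measure.pi ν).prod (Measure.pi ν)) ≤
      (1 : ℝ) / 2 * ∑ i : Fin n,
        ∫ ω, (f ω.1 - f (Function.update ω.1 i (ω.2 i))) ^ 2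
          ∂((Measure.pi ν).prod (Measure.pi ν)) :=
  efron_stein_general n ν f hf2
end

section
/- With e uniform over subsets of {1,…,n} of size n−p and V_k^e(Xᵢ) the k nearest neighbors of Xᵢ among indexed-by-e points, let σᵢ(j) denote the rank of Xⱼ as a neighbor of Xᵢ in the full sample. Then ∑_{j : k < σᵢ(j) ≤ k+p} P(i ∉ e, j ∈ V_k^e(Xᵢ)) = (kp/n) · (p−1)/(n−1). -/
/-
Double counting over pairs `(e, j)`. For a training set `e ∌ i` of size `n - p`, the `k` nearest
neighbours of `X i` in `e` either are among its `k` nearest neighbours in the full sample (these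
are exactly the full-sample `k` nearest neighbours lying in `e`) or have full-sample rank in
`(k, k + p]`, because only `p - 1` points of the sample other than `X i` are missing from `e`.
Summing over `e` gives `k C(n-1, n-p) - k C(n-2, n-p-1) = k C(n-2, n-p)` for the count, and
`C(n-2, n-p) n (n-1) = C(n, n-p) p (p-1)`.
-/

set_option autoImplicit false

open Finset

/-- `j` is one of the `k` nearest neighbors of the point `X i` among the points indexed by
`e`: `j ∈ e` and fewer than `k` points of `e` are strictly closer to `X i` than `X j`. -/
def IsKNN {n d : ℕ} (X : Fin n → EuclideanSpace ℝ (Fin d)) (k : ℕ)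
    (e : Finset (Fin n)) (i j : Fin n) : Prop :=
  j ∈ e ∧ (e.filter (fun l => dist (X i) (X l) < dist (X i) (X j))).card < k

/-- The rank `σᵢ(j)` of `X j` as a neighbor of `X i` in the full sample: the number of
indices `l ≠ i` with `dist (X i) (X l) ≤ dist (X i) (X j)` (so the nearest neighbor has
rank 1). -/
noncomputable def nnRank {n d : ℕ} (X : Fin n → EuclideanSpace ℝ (Fin d))
    (i j : Fin n) : ℕ :=
  ((Finset.univ : Finset (Fin n)).filter
    (fun l => l ≠ i ∧ dist (X i) (X l) ≤ dist (X i) (X j))).card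

theorem Nat.choose_mul_descFactorial_two (n m : ℕ) :
    n.choose m * (n + 2).descFactorial 2 = (n + 2).choose m * (n + 2 - m).descFactorial 2 := by
  have h₁ := Nat.choose_mul_succ_eq n m
  have h₂ := Nat.choose_mul_succ_eq (n + 1) m
  simp only [Nat.descFactorial_succ, Nat.descFactorial_zero, mul_one, Nat.sub_zero]
  rw [show n + 2 - m - 1 = n + 1 - m by omega, show n + 2 - 1 = n + 1 by omega]
  calc n.choose m * ((n + 1) * (n + 2)) = n.choose m * (n + 1) * (n + 2) := by ring
    _ = (n + 1).choose m * (n + 2) * (n + 1 - m) := by rw [h₁]; ring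
    _ = (n + 2).choose m * ((n + 1 - m) * (n + 2 - m)) := by rw [h₂]; ring

namespace Finset

variable {α β : Type*} [LinearOrder β]

def rankBy (s : Finset α) (f : α → β) (a : α) : ℕ := #{l ∈ s | f l < f a}

variable {s t : Finset α} {f : α → β} {a b : α}

theorem rankBy_lt_card (ha : a ∈ s) : s.rankBy f a < #s :=
  card_lt_card (filter_ssubset.2 ⟨a, ha, lt_irrefl _⟩)

theorem rankBy_lt_rankBy (hb : b ∈ s) (h : f b < f a) : s.rankBy f b < s.rankBy f a :=
  card_lt_card <| (ssubset_iff_of_subset (monotone_filter_right s fun _ _ hl => hl.trans h)).2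
    ⟨b, mem_filter.2 ⟨hb, h⟩, by simp⟩

theorem injOn_rankBy (hf : Set.InjOn f s) : Set.InjOn (s.rankBy f) s := by
  intro a ha b hb hab
  by_contra hne
  rcases (hf.ne ha hb hne).lt_or_gt with h | h
  · exact (rankBy_lt_rankBy ha h).ne hab
  · exact (rankBy_lt_rankBy hb h).ne' hab

theorem image_rankBy (hf : Set.InjOn f s) : s.image (s.rankBy f) = range #s := by
  refine eq_of_subset_of_card_le (fun m hm => ?_) ?_
  · obtain ⟨a, ha, rfl⟩ := mem_image.1 hm
    exact mem_range.2 (rankBy_lt_card ha)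
  · rw [card_range, card_image_of_injOn (injOn_rankBy hf)]

theorem card_filter_rankBy_lt (hf : Set.InjOn f s) (k : ℕ) :
    #{a ∈ s | s.rankBy f a < k} = min k #s := by
  rw [← card_image_of_injOn ((injOn_rankBy hf).mono (filter_subset _ s)),
    ← filter_image (p := (· < k)), image_rankBy hf,
    show (range #s).filter (· < k) = range (min k #s) by ext; simp [and_comm], card_range]

theorem rankBy_mono (h : s ⊆ t) : s.rankBy f a ≤ t.rankBy f a :=
  card_le_card (filter_subset_filter _ h)

variable (s t) in
theorem rankBy_le_rankBy_add_card_sdiff [DecidableEq α] :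
    t.rankBy f a ≤ s.rankBy f a + #(t \ s) := by
  refine (card_le_card fun l hl => ?_).trans (card_union_le _ _)
  by_cases hl' : l ∈ s <;> simp_all

/-- Those of the `k` nearest points of `s ⊆ t` whose `t`-rank is below `k` are exactly the `k`
nearest points of `t` lying in `s`. -/
theorem card_filter_rankBy_add_card_inter [DecidableEq α] {k : ℕ} (hf : Set.InjOn f t)
    (hst : s ⊆ t) (hk : k ≤ #s) :
    #{a ∈ s | s.rankBy f a < k ∧ k ≤ t.rankBy f a} + #({a ∈ t | t.rankBy f a < k} ∩ s) = k := by
  have hsplit := card_filter_add_card_filter_not (s := {a ∈ s | s.rankBy f a < k})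
    (fun a => t.rankBy f a < k)
  have hnear : {a ∈ s | s.rankBy f a < k ∧ t.rankBy f a < k} = {a ∈ t | t.rankBy f a < k} ∩ s := by
    ext a
    simp only [mem_filter, mem_inter]
    exact ⟨fun ⟨ha, _, h⟩ => ⟨⟨hst ha, h⟩, ha⟩,
      fun ⟨⟨_, h⟩, ha⟩ => ⟨ha, (rankBy_mono hst).trans_lt h, h⟩⟩
  simp only [filter_filter, not_lt, hnear, card_filter_rankBy_lt (hf.mono hst), min_eq_left hk]
    at hsplit
  omega

theorem card_filter_powersetCard_mem [DecidableEq α] {m : ℕ} (ha : a ∈ s) (hm : 1 ≤ m) :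
    #{e ∈ s.powersetCard m | a ∈ e} = (#s - 1).choose (m - 1) := by
  simpa only [singleton_subset_iff, card_singleton] using
    card_filter_powersetCard_subset {a} s m (singleton_subset_iff.2 ha) (by rwa [card_singleton])

end Finset

section NearestNeighbors

open Classical

variable {n d : ℕ} (X : Fin n → EuclideanSpace ℝ (Fin d)) {i : Fin n}

theorem nnRank_eq_rankBy_add_one
    (hgen : ∀ j l : Fin n, j ≠ l → dist (X i) (X j) ≠ dist (X i) (X l)) {j : Fin n}
    (hj : j ≠ i) :
    nnRank X i j = (univ.erase i).rankBy (fun l => dist (X i) (X l)) j + 1 := by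
  have hdist : ∀ l, dist (X i) (X l) = dist (X i) (X j) ↔ l = j := fun l =>
    ⟨fun h => by_contra fun hne => hgen l j hne h, by rintro rfl; rfl⟩
  have hset : ({l | l ≠ i ∧ dist (X i) (X l) ≤ dist (X i) (X j)} : Finset (Fin n)) =
      insert j {l ∈ univ.erase i | dist (X i) (X l) < dist (X i) (X j)} := by
    ext l
    simp only [mem_filter, mem_univ, true_and, mem_insert, mem_erase, le_iff_lt_or_eq, hdist]
    constructor
    · rintro ⟨hli, hlt | rfl⟩
      exacts [Or.inr ⟨⟨hli, trivial⟩, hlt⟩, Or.inl rfl]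
    · rintro (rfl | ⟨⟨hli, -⟩, hlt⟩)
      exacts [⟨hj, Or.inr rfl⟩, ⟨hli, Or.inl hlt⟩]
  rw [nnRank, hset, card_insert_of_notMem (by simp), rankBy]

theorem card_faraway_knn_add_card_inter
    (hgen : ∀ j l : Fin n, j ≠ l → dist (X i) (X j) ≠ dist (X i) (X l)) {k p : ℕ}
    {e : Finset (Fin n)} (he : e ⊆ univ.erase i) (hcard : #e = n - p) (hk : k ≤ #e) :
    #{j ∈ ({j | k < nnRank X i j ∧ nnRank X i j ≤ k + p} : Finset (Fin n)) | IsKNN X k e i j} +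
      #({j ∈ univ.erase i | (univ.erase i).rankBy (fun l => dist (X i) (X l)) j < k} ∩ e) =
      k := by
  have hinj : Set.InjOn (fun l => dist (X i) (X l)) (univ.erase i) :=
    fun a _ b _ h => by_contra fun hne => hgen a b hne h
  have hout : #(univ.erase i \ e) ≤ p := by
    rw [card_sdiff_of_subset he, card_erase_of_mem (mem_univ _), card_univ, Fintype.card_fin,
      hcard]
    omega
  refine Eq.trans ?_ (card_filter_rankBy_add_card_inter hinj he hk)
  congr 2
  ext j
  simp only [mem_filter, mem_univ, true_and]
  constructor
  · rintro ⟨⟨hlo, -⟩, hje, hrank⟩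
    rw [nnRank_eq_rankBy_add_one X hgen (ne_of_mem_erase (he hje))] at hlo
    exact ⟨hje, hrank, by omega⟩
  · rintro ⟨hje, hrank, hlo⟩
    have hup := rankBy_le_rankBy_add_card_sdiff (f := fun l => dist (X i) (X l)) (a := j) e
      (univ.erase i)
    rw [nnRank_eq_rankBy_add_one X hgen (ne_of_mem_erase (he hje))]
    exact ⟨⟨by omega, by omega⟩, hje, hrank⟩

theorem sum_card_faraway_knn
    (hgen : ∀ j l : Fin n, j ≠ l → dist (X i) (X j) ≠ dist (X i) (X l)) {k p : ℕ}
    (hp : 1 ≤ p) (hk : 1 ≤ k) (hkpn : k + p ≤ n) :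
    ∑ j ∈ ({j | k < nnRank X i j ∧ nnRank X i j ≤ k + p} : Finset (Fin n)),
      #{e ∈ univ.powersetCard (n - p) | i ∉ e ∧ IsKNN X k e i j} =
      k * (n - 2).choose (n - p) := by
  set S : Finset (Fin n) := univ.erase i
  set J : Finset (Fin n) := {j | k < nnRank X i j ∧ nnRank X i j ≤ k + p}
  set R := {j ∈ S | S.rankBy (fun l => dist (X i) (X l)) j < k}
  have hS : #S = n - 1 := by rw [card_erase_of_mem (mem_univ _), card_univ, Fintype.card_fin]
  have hR : #R = k := by
    rw [card_filter_rankBy_lt (fun a _ b _ h => by_contra fun hne => hgen a b hne h), hS]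
    omega
  have hnotMem : ∀ j,
      {e ∈ (univ : Finset (Fin n)).powersetCard (n - p) | i ∉ e ∧ IsKNN X k e i j} =
      {e ∈ S.powersetCard (n - p) | IsKNN X k e i j} := by
    intro j
    ext e
    simp only [mem_filter, mem_powersetCard, S, subset_erase, subset_univ, true_and, and_assoc]
    exact and_left_comm
  have hmem : ∀ j ∈ R, #{e ∈ S.powersetCard (n - p) | j ∈ e} = (n - 2).choose (n - p - 1) := by
    intro j hj
    rw [card_filter_powersetCard_mem (filter_subset _ _ hj) (by omega), hS, Nat.sub_sub]
  have hdouble : ∑ j ∈ J, #{e ∈ S.powersetCard (n - p) | IsKNN X k e i j} +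
      k * (n - 2).choose (n - p - 1) = k * (n - 1).choose (n - p) := by
    calc _ = ∑ e ∈ S.powersetCard (n - p), (#{j ∈ J | IsKNN X k e i j} + #(R ∩ e)) := by
          rw [sum_add_distrib, sum_card_inter hmem, hR]
          exact congrArg (· + _)
            (sum_card_bipartiteAbove_eq_sum_card_bipartiteBelow (fun j e => IsKNN X k e i j))
      _ = k * (n - 1).choose (n - p) := by
        rw [sum_congr rfl fun e he => card_faraway_knn_add_card_inter X hgen
          (mem_powersetCard.1 he).1 (mem_powersetCard.1 he).2
          (by rw [(mem_powersetCard.1 he).2]; omega), sum_const, card_powersetCard, hS,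
          smul_eq_mul, mul_comm]
  have hpascal := Nat.choose_succ_succ' (n - 2) (n - p - 1)
  rw [show n - 2 + 1 = n - 1 by omega, show n - p - 1 + 1 = n - p by omega] at hpascal
  simp only [hnotMem]
  rw [hpascal] at hdouble
  linarith

end NearestNeighbors

open Classical in
/-- For a uniformly random training set `e` of cardinality `n−p`, the sum over those `j`
whose full-sample rank `σᵢ(j)` satisfies `k < σᵢ(j) ≤ k+p` of
`P(i ∉ e, j ∈ V_k^e(X i))` equals `(kp/n)·(p−1)/(n−1)`. -/
theorem sum_faraway_knn_probabilities (n d p k : ℕ) (hp : 1 ≤ p) (hk : 1 ≤ k)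
    (hkpn : k + p ≤ n) (X : Fin n → EuclideanSpace ℝ (Fin d))
    (hgen : ∀ i j l : Fin n, j ≠ l → dist (X i) (X j) ≠ dist (X i) (X l))
    (i : Fin n) :
    (∑ j ∈ (Finset.univ : Finset (Fin n)).filter
        (fun j => k < nnRank X i j ∧ nnRank X i j ≤ k + p),
        (((((Finset.univ : Finset (Fin n)).powersetCard (n - p)).filter
          (fun e => i ∉ e ∧ IsKNN X k e i j)).card : ℝ))) / (n.choose (n - p) : ℝ) =
      ((k : ℝ) * p / n) * (((p : ℝ) - 1) / ((n : ℝ) - 1)) := by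
  have hn : 2 ≤ n := by omega
  have hchoose : ((n - 2).choose (n - p) : ℝ) * (n * (n - 1)) =
      n.choose (n - p) * (p * (p - 1)) := by
    have h := congrArg (Nat.cast : ℕ → ℝ) (Nat.choose_mul_descFactorial_two (n - 2) (n - p))
    rwa [Nat.sub_add_cancel hn, Nat.sub_sub_self (by omega : p ≤ n), Nat.cast_mul, Nat.cast_mul,
      Nat.cast_descFactorial_two, Nat.cast_descFactorial_two] at h
  have hC : (n.choose (n - p) : ℝ) ≠ 0 := by
    exact_mod_cast (Nat.choose_pos (Nat.sub_le n p)).ne'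
  have hn₁ : (n : ℝ) - 1 ≠ 0 := by
    rw [sub_ne_zero]; exact_mod_cast (by omega : n ≠ 1)
  rw [← Nat.cast_sum, sum_card_faraway_knn X (hgen i) hp hk hkpn]
  field_simp
  push_cast
  linear_combination (k : ℝ) * hchoose
end

section
/- Let X₁,…,Xₙ be sampled without replacement from a finite population of N elements with values c₁,…,c_N satisfying a < cᵢ < b for all i, and let μ = (1/N)∑ᵢ cᵢ. Then for all t > 0, P(|(1/n)∑ᵢ₌₁ⁿ Xᵢ − μ| ≥ t) ≤ 2 exp(−2nt²/(b−a)²). -/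
/-!
Condition on the first draw `x`. The remaining draws are a sample without replacement of the
population with `x` removed, whose mean is `μₓ = (N μ - cₓ) / (N - 1)`, and the centred sum of a
sample of size `k + 1` splits as
`(S' - k μₓ) + (1 - k / (N - 1)) (cₓ - μ)`.
The factor `1 - k / (N - 1)` lies in `[0, 1]`, so Hoeffding's lemma for the uniform draw `x`,
together with induction on the sample size, bounds the moment generating function of the centred
sum by `exp (k s² (b - a)² / 8)`, exactly as for independent draws. Chernoff's bound, applied to
`c` and to `-c`, then gives the two-sided tail estimate.
-/

open Finset Real ProbabilityTheory MeasureTheory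
open scoped BigOperators

def embeddingFinSuccEquivSigma (k : ℕ) (α : Type*) :
    (Fin (k + 1) ↪ α) ≃ Σ x : α, (Fin k ↪ {y // y ≠ x}) where
  toFun f := ⟨f 0, ⟨fun i => ⟨f i.succ, f.injective.ne (Fin.succ_ne_zero i)⟩,
    fun _ _ h => Fin.succ_injective _ (f.injective (congrArg Subtype.val h))⟩⟩
  invFun p := ⟨Fin.cons p.1 (fun i => p.2 i), Fin.cons_injective_iff.mpr
    ⟨fun ⟨i, hi⟩ => (p.2 i).2 hi, Subtype.val_injective.comp p.2.injective⟩⟩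
  left_inv f := by ext i; cases i using Fin.cases <;> rfl
  right_inv _ := rfl

theorem sum_embeddingFinSuccEquivSigma_symm {α : Type*} {k : ℕ} (d : α → ℝ) (x : α)
    (e : Fin k ↪ {y // y ≠ x}) :
    ∑ i, d ((embeddingFinSuccEquivSigma k α).symm ⟨x, e⟩ i) = d x + ∑ i, d (e i) := by
  rw [Fin.sum_univ_succ]; rfl

theorem sum_embeddingFinSuccEquivSigma_symm_sub_expect {α : Type*} [Fintype α] [DecidableEq α]
    (d : α → ℝ) {k : ℕ} (x : α) (e : Fin k ↪ {y // y ≠ x}) :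
    ∑ i, d ((embeddingFinSuccEquivSigma k α).symm ⟨x, e⟩ i) -
        (k + 1 : ℕ) * (𝔼 y, d y) =
      (1 - k / (Fintype.card α - 1 : ℝ)) * (d x - 𝔼 y, d y) +
        (∑ i, d (e i) - k * 𝔼 y : {y // y ≠ x}, d y) := by
  have : Nonempty α := ⟨x⟩
  have hcard : Fintype.card {y // y ≠ x} = Fintype.card α - 1 := Set.card_ne_eq x
  have hk : k ≤ Fintype.card α - 1 := by simpa [hcard] using Fintype.card_le_of_embedding e
  have hsub : ∑ y : {y // y ≠ x}, d y = ∑ y, d y - d x := by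
    linarith [Fintype.sum_eq_add_sum_subtype_ne d x]
  simp only [Fintype.expect_eq_sum_div_card]
  rw [sum_embeddingFinSuccEquivSigma_symm, hsub, hcard, Nat.cast_pred Fintype.card_pos]
  rcases k.eq_zero_or_pos with rfl | hk0
  · simp
  · have : (Fintype.card α : ℝ) - 1 ≠ 0 := by
      rw [← Nat.cast_pred Fintype.card_pos]; exact_mod_cast (by omega)
    field_simp
    push_cast
    ring

theorem card_embedding_fin_succ (k : ℕ) (α : Type*) [Fintype α] :
    Fintype.card (Fin (k + 1) ↪ α) = Fintype.card α * (Fintype.card α - 1).descFactorial k := by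
  rw [Fintype.card_embedding_eq, Fintype.card_fin]
  cases Fintype.card α with
  | zero => simp
  | succ m => rw [Nat.succ_descFactorial_succ, Nat.add_sub_cancel]

theorem sq_one_sub_div_le_one {x y : ℝ} (hx : 0 ≤ x) (hxy : x ≤ y) : (1 - x / y) ^ 2 ≤ 1 := by
  have h0 : 0 ≤ x / y := div_nonneg hx (hx.trans hxy)
  have h1 : x / y ≤ 1 := div_le_one_of_le₀ hxy (hx.trans hxy)
  nlinarith

/-- Hoeffding's lemma for a uniformly random element of a finite population. -/
theorem sum_exp_mul_sub_expect_le {α : Type*} [Fintype α] {a b : ℝ} (d : α → ℝ)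
    (hd : ∀ x, d x ∈ Set.Icc a b) (s : ℝ) :
    ∑ x, exp (s * (d x - 𝔼 y, d y)) ≤
      Fintype.card α * exp (s ^ 2 * (b - a) ^ 2 / 8) := by
  cases isEmpty_or_nonempty α
  · simp
  let _ : MeasurableSpace α := ⊤
  set P := (PMF.uniformOfFintype α).toMeasure
  have hmean : P[d] = 𝔼 y, d y := by
    simp [P, PMF.integral_eq_sum, Fintype.expect_eq_sum_div_card, div_eq_inv_mul, mul_sum]
  have hoeffding := (hasSubgaussianMGF_of_mem_Icc (μ := P) (measurable_of_finite d).aemeasurable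
    (.of_forall hd)).mgf_le s
  simp only [hmean, mgf, P, PMF.integral_eq_sum, PMF.uniformOfFintype_apply, ENNReal.toReal_inv,
    ENNReal.toReal_natCast, smul_eq_mul, ← mul_sum] at hoeffding
  rw [inv_mul_le_iff₀ (by positivity)] at hoeffding
  refine hoeffding.trans_eq ?_
  rw [NNReal.coe_pow, NNReal.coe_div, NNReal.coe_ofNat, coe_nnnorm, Real.norm_eq_abs, div_pow,
    sq_abs]
  ring_nf

theorem sum_exp_mul_sum_embedding_sub_expect_le {a b : ℝ} (k : ℕ) {α : Type*} [Fintype α]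
    (d : α → ℝ) (hd : ∀ x, d x ∈ Set.Icc a b) (s : ℝ) :
    ∑ f : Fin k ↪ α, exp (s * (∑ i, d (f i) - k * (𝔼 x, d x))) ≤
      Fintype.card (Fin k ↪ α) * exp (k * (s ^ 2 * (b - a) ^ 2 / 8)) := by
  classical
  induction k generalizing α with
  | zero => simp
  | succ k ih =>
    set m := Fintype.card α
    set μ := 𝔼 x, d x
    rcases lt_or_ge m (k + 1) with hm | hkm
    · have : IsEmpty (Fin (k + 1) ↪ α) := Function.Embedding.isEmpty_of_card_lt (by simp; omega)
      simp
    set r : ℝ := 1 - k / ((m : ℝ) - 1)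
    have hr : (s * r) ^ 2 ≤ s ^ 2 := by
      have hkm' : (k : ℝ) + 1 ≤ m := by exact_mod_cast hkm
      rw [mul_pow]
      nlinarith [sq_one_sub_div_le_one k.cast_nonneg (by linarith : (k : ℝ) ≤ m - 1), sq_nonneg s]
    set C : ℝ := (m - 1).descFactorial k * exp (k * (s ^ 2 * (b - a) ^ 2 / 8))
    have hinner (x : α) : ∑ e : Fin k ↪ {y // y ≠ x}, exp (s * (∑ i, d (e i) -
        k * 𝔼 y : {y // y ≠ x}, d y)) ≤ C := by
      have hcard : Fintype.card {y // y ≠ x} = m - 1 := Set.card_ne_eq x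
      refine (ih (fun y : {y // y ≠ x} => d y) (fun y => hd y)).trans_eq ?_
      rw [Fintype.card_embedding_eq, Fintype.card_fin, hcard]
    calc ∑ f : Fin (k + 1) ↪ α, exp (s * (∑ i, d (f i) - (k + 1 : ℕ) * μ))
        = ∑ x, ∑ e : Fin k ↪ {y // y ≠ x}, exp (s * (∑ i,
            d ((embeddingFinSuccEquivSigma k α).symm ⟨x, e⟩ i) - (k + 1 : ℕ) * μ)) := by
          rw [← (embeddingFinSuccEquivSigma k α).symm.sum_comp, Fintype.sum_sigma]
      _ = ∑ x, exp (s * r * (d x - μ)) * ∑ e : Fin k ↪ {y // y ≠ x}, exp (s * (∑ i, d (e i) -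
            k * 𝔼 y : {y // y ≠ x}, d y)) := by
          simp only [μ, m, r]
          simp_rw [sum_embeddingFinSuccEquivSigma_symm_sub_expect, mul_add, ← mul_assoc, exp_add,
            mul_sum]
      _ ≤ (∑ x, exp (s * r * (d x - μ))) * C := by
          rw [sum_mul]
          gcongr with x
          exact hinner x
      _ ≤ (m * exp (s ^ 2 * (b - a) ^ 2 / 8)) * C := by
          gcongr
          refine (sum_exp_mul_sub_expect_le d hd _).trans ?_
          gcongr _ * exp (?_ * _ / _)
      _ = Fintype.card (Fin (k + 1) ↪ α) * exp ((k + 1 : ℕ) * (s ^ 2 * (b - a) ^ 2 / 8)) := by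
          rw [card_embedding_fin_succ]
          push_cast
          rw [add_one_mul (k : ℝ), exp_add]
          ring

theorem card_filter_mul_exp_le_sum_exp {ι : Type*} (s : Finset ι) (g : ι → ℝ) (u : ℝ) {r : ℝ}
    (hr : 0 ≤ r) [DecidablePred (u ≤ g ·)] :
    (#{i ∈ s | u ≤ g i} : ℝ) * exp (r * u) ≤ ∑ i ∈ s, exp (r * g i) := by
  rw [← nsmul_eq_mul]
  calc #{i ∈ s | u ≤ g i} • exp (r * u) ≤ ∑ i ∈ s with u ≤ g i, exp (r * g i) :=
        card_nsmul_le_sum _ _ _ fun i hi => by gcongr; exact (mem_filter.1 hi).2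
    _ ≤ ∑ i ∈ s, exp (r * g i) :=
        sum_le_sum_of_subset_of_nonneg (filter_subset _ _) fun _ _ _ => (exp_pos _).le

theorem card_filter_le_sum_embedding_sub_expect_le {α : Type*} [Fintype α] {a b : ℝ} (d : α → ℝ)
    (hd : ∀ x, d x ∈ Set.Icc a b) (k : ℕ) {t : ℝ} (ht : 0 ≤ t)
    [DecidablePred fun f : Fin k ↪ α => k * t ≤ ∑ i, d (f i) - k * (𝔼 x, d x)] :
    (#{f : Fin k ↪ α | k * t ≤ ∑ i, d (f i) - k * (𝔼 x, d x)} : ℝ) ≤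
      Fintype.card (Fin k ↪ α) * exp (-2 * k * t ^ 2 / (b - a) ^ 2) := by
  -- `s` minimises `k s² (b - a)² / 8 - s k t`; if `b = a`, both sides of `hexp` are `0` as `x / 0 = 0`.
  set s := 4 * t / (b - a) ^ 2
  have hexp : k * (s ^ 2 * (b - a) ^ 2 / 8) - s * (k * t) = -2 * k * t ^ 2 / (b - a) ^ 2 := by
    rcases eq_or_ne (b - a) 0 with h | h
    · simp [s, h]
    · simp only [s]; field_simp; ring
  have hchernoff := (card_filter_mul_exp_le_sum_exp univ _ (k * t) (by positivity : 0 ≤ s)).trans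
    (sum_exp_mul_sum_embedding_sub_expect_le k d hd s)
  calc _ ≤ Fintype.card (Fin k ↪ α) * exp (k * (s ^ 2 * (b - a) ^ 2 / 8)) / exp (s * (k * t)) :=
        (le_div_iff₀ (exp_pos _)).2 hchernoff
    _ = _ := by rw [mul_div_assoc, ← exp_sub, hexp]

theorem le_sum_sub_or_le_sum_neg_sub_of_le_abs {n : ℕ} (x : Fin n → ℝ) {μ t : ℝ}
    (h : t ≤ |(1 / n) * ∑ i, x i - μ|) :
    n * t ≤ ∑ i, x i - n * μ ∨ n * t ≤ ∑ i, -x i - n * -μ := by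
  have hscale : (n : ℝ) * ((1 / n) * ∑ i, x i - μ) = ∑ i, x i - n * μ := by
    rcases n.eq_zero_or_pos with rfl | hn
    · simp
    · field_simp
  have := mul_le_mul_of_nonneg_left h n.cast_nonneg
  rw [← abs_of_nonneg (n.cast_nonneg : (0 : ℝ) ≤ n), ← abs_mul, abs_of_nonneg n.cast_nonneg,
    hscale] at this
  rw [sum_neg_distrib]
  rcases le_abs'.1 this with h | h
  · right; linarith
  · left; linarith

open Classical in
theorem hoeffding_finite_population_general (N n : ℕ)
    (c : Fin N → ℝ) (a b : ℝ) (hab : ∀ i, a < c i ∧ c i < b) (t : ℝ) (ht : 0 < t) :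
    ((((Finset.univ : Finset (Fin n ↪ Fin N))).filter
        (fun f => t ≤ |(1 / (n : ℝ)) * ∑ i, c (f i) - (1 / (N : ℝ)) * ∑ i, c i|)).card : ℝ) /
        (Fintype.card (Fin n ↪ Fin N) : ℝ) ≤
      2 * Real.exp (-2 * n * t ^ 2 / (b - a) ^ 2) := by
  have hupper := card_filter_le_sum_embedding_sub_expect_le c
    (fun i => ⟨(hab i).1.le, (hab i).2.le⟩) n ht.le
  have hlower := card_filter_le_sum_embedding_sub_expect_le (-c)
    (fun i => ⟨neg_le_neg (hab i).2.le, neg_le_neg (hab i).1.le⟩) n ht.le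
  rw [neg_sub_neg] at hlower
  have hmean : (1 / (N : ℝ)) * ∑ i, c i = 𝔼 i, c i := by
    rw [Fintype.expect_eq_sum_div_card, Fintype.card_fin, one_div_mul_eq_div]
  set A := univ.filter fun f : Fin n ↪ Fin N =>
    n * t ≤ ∑ i, c (f i) - n * 𝔼 x, c x
  set B := univ.filter fun f : Fin n ↪ Fin N =>
    n * t ≤ ∑ i, (-c) (f i) - n * 𝔼 x, (-c) x
  refine div_le_of_le_mul₀ (by positivity) (by positivity) ?_
  calc _ ≤ (#(A ∪ B) : ℝ) := by
        refine Nat.cast_le.2 (card_le_card fun f hf => ?_)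
        simp only [A, B, mem_filter, mem_union, mem_univ, true_and, hmean] at hf ⊢
        simpa [expect_neg_distrib] using le_sum_sub_or_le_sum_neg_sub_of_le_abs (fun i => c (f i)) hf
    _ ≤ #A + #B := mod_cast card_union_le _ _
    _ ≤ _ := by linarith

open Classical in
/-- Hoeffding's inequality for sampling without replacement from a finite population:
if `X₁,…,Xₙ` are sampled without replacement from values `c₁,…,c_N` with `a < cᵢ < b`,
and `μ = (1/N) ∑ᵢ cᵢ`, then for all `t > 0`,
`P(|(1/n) ∑ᵢ Xᵢ − μ| ≥ t) ≤ 2 exp(−2nt²/(b−a)²)`, where the probability is the uniform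
distribution over ordered samples of `n` distinct elements. -/
theorem hoeffding_finite_population (N n : ℕ) (hn : 0 < n) (hnN : n ≤ N)
    (c : Fin N → ℝ) (a b : ℝ) (hab : ∀ i, a < c i ∧ c i < b) (t : ℝ) (ht : 0 < t) :
    ((((Finset.univ : Finset (Fin n ↪ Fin N))).filter
        (fun f => t ≤ |(1 / (n : ℝ)) * ∑ i, c (f i) - (1 / (N : ℝ)) * ∑ i, c i|)).card : ℝ) /
        (Fintype.card (Fin n ↪ Fin N) : ℝ) ≤
      2 * Real.exp (-2 * n * t ^ 2 / (b - a) ^ 2) :=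
  hoeffding_finite_population_general N n c a b hab t ht
end
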